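/- arXiv:2512.11051 — 6 statements merged into one kernel-verified Lean document; each statement's English description precedes it below -/
import Mathlib

section
/- Assume Condition (6.1) and set σ_J² = Σ_{i∈I} α_i² σ_i². Then ∫_{{R₀ ≤ p}} (J·R₀)² dμ_Δ = 2σ_J² log p + O(1); that is, there exists a constant C' > 0 such that |∫_{{R₀ ≤ p}} (J·R₀)² dμ_Δ − 2σ_J² log p| ≤ C' for all integers p ≥ 1. -/
open MeasureTheory Filter Set Real Topology

noncomputable section

/-- The underlying set of the one-sided Young tower `Δ = {(z,ℓ) : z ∈ Z, 0 ≤ ℓ < τ(z)}`. -/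
def TowerSet {Z : Type*} (τ : Z → ℕ) : Set (Z × ℕ) := {p | p.2 < τ p.1}

/-- The tower map `f_Δ(z,ℓ) = (z,ℓ+1)` for `ℓ < τ(z) - 1` and `f_Δ(z,τ(z)-1) = (Fz,0)`. -/
def towerMap {Z : Type*} (F : Z → Z) (τ : Z → ℕ) (hτ : ∀ z, 0 < τ z)
    (x : TowerSet τ) : TowerSet τ :=
  if h : x.1.2 + 1 < τ x.1.1 then ⟨(x.1.1, x.1.2 + 1), h⟩
  else ⟨(F x.1.1, 0), hτ _⟩

/-- The tower measure `μ_Δ = (μ_Z × counting)/τ̄` where `τ̄ = ∫ τ dμ_Z`. -/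
def towerMeasure {Z : Type*} [MeasurableSpace Z] (μZ : Measure Z) (τ : Z → ℕ) :
    Measure (TowerSet τ) :=
  (ENNReal.ofReal (∫ z, (τ z : ℝ) ∂μZ))⁻¹ •
    Measure.comap Subtype.val (μZ.prod Measure.count)

/-- Separation time of the base map `F` with respect to the partition `P`:
the least `m ≥ 0` such that `F^m z` and `F^m z'` lie in distinct partition elements
(`⊤` if there is no such `m`). -/
def sepTime {Z : Type*} (F : Z → Z) (P : ℕ → Set Z) (z z' : Z) : ℕ∞ :=
  ⨅ (m : ℕ) (_ : ¬ ∃ j, F^[m] z ∈ P j ∧ F^[m] z' ∈ P j), (m : ℕ∞)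

/-- The metric `d_θ(z,z') = θ^{s(z,z')}`. -/
def sepDist {Z : Type*} (F : Z → Z) (P : ℕ → Set Z) (θ : ℝ) (z z' : Z) : ℝ :=
  if sepTime F P z z' = ⊤ then 0 else θ ^ (sepTime F P z z').toNat

/-- An observable on the tower is piecewise constant if it is constant on each
set `Z_j × {ℓ}`, `0 ≤ ℓ < τ|_{Z_j}`. -/
def PiecewiseConst {Z : Type*} (P : ℕ → Set Z) (τ : Z → ℕ) {β : Type*}
    (V : TowerSet τ → β) : Prop :=
  ∀ x y : TowerSet τ, (∃ j, x.1.1 ∈ P j ∧ y.1.1 ∈ P j) → x.1.2 = y.1.2 → V x = V y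

/-!
On the level set `{R₀ = n, J = α i}` the integrand `(J R₀)²` is the constant `α i² n²`, so the
truncated integral equals `∑_{n ≤ p} n² ∑_i α i² μ_Δ(R₀ = n, J = α i)`. By Condition (6.1) the inner
sum is `2σ_J²/n³ + O(n^{-(3+ε)})`, so the `n`-th term is `2σ_J²/n` up to a summable error
`O(n^{-(1+ε)})`, and `∑_{n ≤ p} 1/n = log p + O(1)`.
-/

theorem PiecewiseConst.measurable {Z : Type*} [MeasurableSpace Z] {P : ℕ → Set Z}
    (hPmeas : ∀ j, MeasurableSet (P j)) (hPcover : ⋃ j, P j = univ)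
    {τ : Z → ℕ} {β : Type*} [MeasurableSpace β] {V : TowerSet τ → β}
    (hV : PiecewiseConst P τ V) : Measurable V := by
  intro S _
  let cell : ℕ × ℕ → Set (TowerSet τ) := fun q => Subtype.val ⁻¹' (P q.1 ×ˢ {q.2})
  have hcover : ⋃ q, cell q = univ := by
    refine eq_univ_of_forall fun x => ?_
    obtain ⟨j, hj⟩ := mem_iUnion.mp (hPcover ▸ mem_univ x.1.1)
    exact mem_iUnion.mpr ⟨(j, x.1.2), hj, rfl⟩
  rw [← inter_univ (V ⁻¹' S), ← hcover, inter_iUnion]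
  refine .iUnion fun q => ?_
  -- `V` is constant on the cell, so the cell lies either inside `V ⁻¹' S` or outside it.
  by_cases h : ∃ y ∈ cell q, V y ∈ S
  · obtain ⟨y, hy, hyS⟩ := h
    have hVS : V ⁻¹' S ∩ cell q = cell q := inter_eq_right.mpr fun x hx => by
      rw [mem_preimage, hV x y ⟨q.1, hx.1, hy.1⟩ (hx.2.trans hy.2.symm)]
      exact hyS
    rw [hVS]
    exact measurable_subtype_coe ((hPmeas q.1).prod (measurableSet_singleton q.2))
  · rw [eq_empty_of_forall_notMem fun x (hx : x ∈ V ⁻¹' S ∩ cell q) => h ⟨x, hx.2, hx.1⟩]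
    exact .empty

theorem isFiniteMeasure_of_integrable_of_one_le {X : Type*} [MeasurableSpace X]
    {μ : Measure X} {f : X → ℝ} (hf : Integrable f μ) (h1 : ∀ x, 1 ≤ f x) :
    IsFiniteMeasure μ := by
  have hall : {x | 1 ≤ ‖f x‖} = univ :=
    eq_univ_of_forall fun x => (h1 x).trans (le_abs_self (f x))
  exact ⟨hall ▸ hf.measure_norm_ge_lt_top one_pos⟩

theorem setIntegral_le_eq_sum_Icc {X : Type*} [MeasurableSpace X] {μ : Measure X}
    {R : X → ℕ} (hR : Measurable R) (hR1 : ∀ x, 1 ≤ R x) {f : X → ℝ} {p : ℕ}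
    (hf : IntegrableOn f {x | R x ≤ p} μ) :
    ∫ x in {x | R x ≤ p}, f x ∂μ = ∑ n ∈ Finset.Icc 1 p, ∫ x in {x | R x = n}, f x ∂μ := by
  have hlevels : {x | R x ≤ p} = ⋃ n ∈ Finset.Icc 1 p, {x | R x = n} := by
    ext x
    simp [hR1 x]
  rw [hlevels]
  refine integral_biUnion_finset _ (fun n _ => hR (measurableSet_singleton n)) ?_ ?_
  · exact fun n _ m _ hnm => disjoint_left.mpr fun x hxn hxm => hnm (hxn.symm.trans hxm)
  · exact fun n hn => hf.mono_set fun x (hx : R x = n) => hx.trans_le (Finset.mem_Icc.mp hn).2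

theorem integrableOn_sq_mul_of_le {X : Type*} [MeasurableSpace X] {μ : Measure X}
    {R : X → ℕ} (hR : Measurable R) {J : X → ℝ} (hJ : Measurable J)
    (hJ2 : Integrable (fun x => J x ^ 2) μ) (p : ℕ) :
    IntegrableOn (fun x => (J x * (R x : ℝ)) ^ 2) {x | R x ≤ p} μ :=
  (hJ2.mul_const ((p : ℝ) ^ 2)).integrableOn.mono'
    ((hJ.mul (measurable_from_top.comp hR)).pow_const 2).aestronglyMeasurable
    (ae_restrict_of_forall_mem (hR measurableSet_Iic) fun x (hx : R x ≤ p) => by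
      rw [Real.norm_of_nonneg (sq_nonneg _), mul_pow]
      gcongr)

theorem setIntegral_comp_eq_tsum {X I : Type*} [MeasurableSpace X] [Countable I]
    {μ : Measure X} {J : X → ℝ} (hJ : Measurable J) {α : I → ℝ} (hα : Function.Injective α)
    (hJα : ∀ x, ∃ i, J x = α i) {s : Set X} (hs : MeasurableSet s) {φ : ℝ → ℝ}
    (hφ : IntegrableOn (fun x => φ (J x)) s μ) :
    ∫ x in s, φ (J x) ∂μ = ∑' i, φ (α i) * μ.real {x | x ∈ s ∧ J x = α i} := by
  have hfibres : s = ⋃ i, {x | x ∈ s ∧ J x = α i} := by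
    ext x
    simp only [mem_iUnion, mem_ofPred_eq, exists_and_left, iff_self_and]
    exact fun _ => hJα x
  have hmeas : ∀ i, MeasurableSet {x | x ∈ s ∧ J x = α i} :=
    fun i => hs.inter (hJ (measurableSet_singleton (α i)))
  have hdisj : Pairwise (Function.onFun Disjoint fun i => {x | x ∈ s ∧ J x = α i}) :=
    fun i i' hii' => disjoint_left.mpr fun x hx hx' => hii' (hα (hx.2.symm.trans hx'.2))
  conv_lhs => rw [hfibres]
  rw [integral_iUnion hmeas hdisj (hfibres ▸ hφ)]
  refine tsum_congr fun i => ?_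
  rw [setIntegral_congr_fun (hmeas i) fun x hx => congrArg φ hx.2, setIntegral_const,
    smul_eq_mul, mul_comm]

theorem setIntegral_sq_mul_eq_tsum {X I : Type*} [MeasurableSpace X] [Countable I]
    {μ : Measure X} {R : X → ℕ} (hR : Measurable R) {J : X → ℝ} (hJ : Measurable J)
    {α : I → ℝ} (hα : Function.Injective α) (hJα : ∀ x, ∃ i, J x = α i)
    (hJ2 : Integrable (fun x => J x ^ 2) μ) (n : ℕ) :
    ∫ x in {x | R x = n}, (J x * (R x : ℝ)) ^ 2 ∂μ =
      (n : ℝ) ^ 2 * ∑' i, α i ^ 2 * μ.real {x | R x = n ∧ J x = α i} := by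
  have hs : MeasurableSet {x | R x = n} := hR (measurableSet_singleton n)
  rw [setIntegral_congr_fun hs fun x (hx : R x = n) => by rw [hx, mul_pow, mul_comm],
    integral_const_mul, setIntegral_comp_eq_tsum (φ := (· ^ 2)) hJ hα hJα hs hJ2.integrableOn]
  rfl

theorem abs_tsum_mul_sub_tsum_mul_le {I : Type*} {a x y : I → ℝ} {B : ℝ}
    (ha : ∀ i, |a i| ≤ B) (hy : Summable fun i => a i * y i)
    (hxy : Summable fun i => |x i - y i|) :
    |∑' i, a i * x i - ∑' i, a i * y i| ≤ B * ∑' i, |x i - y i| := by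
  have hbound : ∀ i, ‖a i * (x i - y i)‖ ≤ B * |x i - y i| := fun i => by
    rw [norm_mul, Real.norm_eq_abs, Real.norm_eq_abs]
    exact mul_le_mul_of_nonneg_right (ha i) (abs_nonneg _)
  have hdiff : Summable fun i => a i * (x i - y i) := (hxy.mul_left B).of_norm_bounded hbound
  have hsplit : ∑' i, a i * x i = ∑' i, a i * (x i - y i) + ∑' i, a i * y i := by
    rw [← hdiff.tsum_add hy]
    exact tsum_congr fun i => by ring
  rw [hsplit, add_sub_cancel_right]
  exact tsum_of_norm_bounded (hxy.hasSum.mul_left B) hbound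

theorem abs_tsum_sq_mul_sub_le {I : Type*} {α σ m : I → ℝ} {B t K : ℝ}
    (hα : ∀ i, |α i| ≤ B) (hσ : Summable fun i => σ i ^ 2)
    (hm : Summable fun i => |m i - 2 * σ i ^ 2 / t|)
    (hmK : ∑' i, |m i - 2 * σ i ^ 2 / t| ≤ K) :
    |∑' i, α i ^ 2 * m i - 2 * (∑' i, α i ^ 2 * σ i ^ 2) / t| ≤ B ^ 2 * K := by
  have hαsq : ∀ i, |α i ^ 2| ≤ B ^ 2 := fun i => by
    rw [abs_sq]
    exact sq_le_sq' (abs_le.mp (hα i)).1 (abs_le.mp (hα i)).2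
  have hσα : Summable fun i => α i ^ 2 * σ i ^ 2 :=
    (hσ.mul_left (B ^ 2)).of_norm_bounded fun i => by
      rw [norm_mul, Real.norm_eq_abs, Real.norm_of_nonneg (sq_nonneg _)]
      exact mul_le_mul_of_nonneg_right (hαsq i) (sq_nonneg _)
  have hlimit : ∑' i, α i ^ 2 * (2 * σ i ^ 2 / t) = 2 * (∑' i, α i ^ 2 * σ i ^ 2) / t := by
    rw [← tsum_mul_left, ← tsum_div_const]
    exact tsum_congr fun i => by ring
  have hdeviation := abs_tsum_mul_sub_tsum_mul_le hαsq
    ((hσα.mul_left (2 / t)).congr fun i => by ring) hm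
  rw [hlimit] at hdeviation
  exact hdeviation.trans (mul_le_mul_of_nonneg_left hmK (sq_nonneg B))

theorem abs_sum_Icc_inv_sub_log_le_one (p : ℕ) :
    |∑ n ∈ Finset.Icc 1 p, (n : ℝ)⁻¹ - log p| ≤ 1 := by
  have hharmonic : ∑ n ∈ Finset.Icc 1 p, (n : ℝ)⁻¹ = harmonic p := by
    rw [harmonic_eq_sum_Icc]
    push_cast
    rfl
  have hlog : log p ≤ log (p + 1) := by
    rcases p.eq_zero_or_pos with rfl | hp
    · simp
    · exact log_le_log (by positivity) (by linarith)
  have hlower := log_add_one_le_harmonic p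
  have hupper := harmonic_le_one_add_log p
  push_cast at hlower
  rw [hharmonic, abs_le]
  constructor <;> linarith

theorem exists_abs_sum_sq_mul_sub_mul_log_le {E : ℕ → ℝ} {c D ε : ℝ} (hε : 0 < ε)
    (hE : ∀ n : ℕ, 1 ≤ n → |E n - c / (n : ℝ) ^ 3| ≤ D / (n : ℝ) ^ ((3 : ℝ) + ε)) :
    ∃ C' : ℝ, 0 < C' ∧ ∀ p : ℕ,
      |∑ n ∈ Finset.Icc 1 p, (n : ℝ) ^ 2 * E n - c * log p| ≤ C' := by
  have hsummable : Summable fun n : ℕ => 1 / (n : ℝ) ^ ((1 : ℝ) + ε) :=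
    Real.summable_one_div_nat_rpow.mpr (by linarith)
  set K := ∑' n : ℕ, 1 / (n : ℝ) ^ ((1 : ℝ) + ε)
  refine ⟨|D| * K + |c| + 1, by positivity, fun p => ?_⟩
  have hterm : ∀ n ∈ Finset.Icc 1 p,
      |(n : ℝ) ^ 2 * E n - c * (n : ℝ)⁻¹| ≤ |D| * (1 / (n : ℝ) ^ ((1 : ℝ) + ε)) := by
    intro n hmem
    have hn1 : 1 ≤ n := (Finset.mem_Icc.mp hmem).1
    have hn : (0 : ℝ) < n := by exact_mod_cast hn1
    have hpow : (n : ℝ) ^ ((3 : ℝ) + ε) = (n : ℝ) ^ 2 * (n : ℝ) ^ ((1 : ℝ) + ε) := by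
      rw [show (3 : ℝ) + ε = (2 : ℕ) + (1 + ε) by push_cast; ring, rpow_add hn, rpow_natCast]
    have hfactor :
        (n : ℝ) ^ 2 * E n - c * (n : ℝ)⁻¹ = (n : ℝ) ^ 2 * (E n - c / (n : ℝ) ^ 3) := by
      field_simp
    calc |(n : ℝ) ^ 2 * E n - c * (n : ℝ)⁻¹|
        = (n : ℝ) ^ 2 * |E n - c / (n : ℝ) ^ 3| := by rw [hfactor, abs_mul, abs_sq]
      _ ≤ (n : ℝ) ^ 2 * (D / (n : ℝ) ^ ((3 : ℝ) + ε)) := by gcongr; exact hE n hn1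
      _ = D * (1 / (n : ℝ) ^ ((1 : ℝ) + ε)) := by rw [hpow]; field_simp
      _ ≤ |D| * (1 / (n : ℝ) ^ ((1 : ℝ) + ε)) := by gcongr; exact le_abs_self D
  have herror : |∑ n ∈ Finset.Icc 1 p, ((n : ℝ) ^ 2 * E n - c * (n : ℝ)⁻¹)| ≤ |D| * K :=
    calc _ ≤ ∑ n ∈ Finset.Icc 1 p, |D| * (1 / (n : ℝ) ^ ((1 : ℝ) + ε)) :=
          (Finset.abs_sum_le_sum_abs _ _).trans (Finset.sum_le_sum hterm)
      _ ≤ |D| * K := by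
          rw [← Finset.mul_sum]
          gcongr
          exact hsummable.sum_le_tsum _ fun n _ => by positivity
  have hharmonic : |c * ∑ n ∈ Finset.Icc 1 p, (n : ℝ)⁻¹ - c * log p| ≤ |c| := by
    rw [← mul_sub, abs_mul]
    exact mul_le_of_le_one_right (abs_nonneg c) (abs_sum_Icc_inv_sub_log_le_one p)
  calc |∑ n ∈ Finset.Icc 1 p, (n : ℝ) ^ 2 * E n - c * log p|
      = |∑ n ∈ Finset.Icc 1 p, ((n : ℝ) ^ 2 * E n - c * (n : ℝ)⁻¹)
          + (c * ∑ n ∈ Finset.Icc 1 p, (n : ℝ)⁻¹ - c * log p)| := by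
        rw [Finset.sum_sub_distrib, Finset.mul_sum]
        ring_nf
    _ ≤ |D| * K + |c| := (abs_add_le _ _).trans (add_le_add herror hharmonic)
    _ ≤ |D| * K + |c| + 1 := by linarith

theorem truncated_second_moment_JR0_general
    -- the base probability space and its countable measurable partition
    {Z : Type*} [MeasurableSpace Z] (μZ : Measure Z)
    (P : ℕ → Set Z) (hPmeas : ∀ j, MeasurableSet (P j))
    (hPcover : (⋃ j, P j) = Set.univ)
    -- the return time: positive, constant on partition elements, exponential tails
    (τ : Z → ℕ)
    -- the distinguished observable `R₀`: integrable, positive, piecewise constant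
    (R₀ : TowerSet τ → ℕ) (hR₀pos : ∀ x, 0 < R₀ x)
    (hR₀pc : PiecewiseConst P τ R₀)
    (hR₀int : Integrable (fun x => (R₀ x : ℝ)) (towerMeasure μZ τ))
    -- the observable `J`: bounded, piecewise constant, with (distinct) values `α i`
    (J : TowerSet τ → ℝ) (hJbd : ∃ B : ℝ, ∀ x, |J x| ≤ B)
    (hJpc : PiecewiseConst P τ J)
    (I : Type*) [Countable I] (α : I → ℝ) (hαinj : Function.Injective α)
    (hJvals : ∀ x, ∃ i, J x = α i) (hαatt : ∀ i, ∃ x, J x = α i)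
    -- Condition (6.1)
    (σ : I → ℝ)
    (hσsum : Summable (fun i => σ i ^ 2))
    (C ε : ℝ) (hε : ε ∈ Set.Ioo (0:ℝ) 1)
    (h61 : ∀ n : ℕ, 1 ≤ n →
      Summable (fun i =>
        |(towerMeasure μZ τ {x | R₀ x = n ∧ J x = α i}).toReal -
          2 * σ i ^ 2 / (n : ℝ) ^ 3|) ∧
      ∑' i, |(towerMeasure μZ τ {x | R₀ x = n ∧ J x = α i}).toReal -
          2 * σ i ^ 2 / (n : ℝ) ^ 3| ≤ C / (n : ℝ) ^ ((3:ℝ) + ε))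
    :
    ∃ C' : ℝ, 0 < C' ∧ ∀ p : ℕ, 1 ≤ p →
      |(∫ x in {x | R₀ x ≤ p}, (J x * (R₀ x : ℝ)) ^ 2 ∂(towerMeasure μZ τ)) -
          2 * (∑' i, α i ^ 2 * σ i ^ 2) * Real.log p| ≤ C' := by
  obtain ⟨B, hB⟩ := hJbd
  have : IsFiniteMeasure (towerMeasure μZ τ) :=
    isFiniteMeasure_of_integrable_of_one_le hR₀int fun x => by exact_mod_cast hR₀pos x
  have hR := hR₀pc.measurable hPmeas hPcover
  have hJ := hJpc.measurable hPmeas hPcover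
  have hJ2 : Integrable (fun x => J x ^ 2) (towerMeasure μZ τ) :=
    .of_bound (hJ.pow_const 2).aestronglyMeasurable (B ^ 2) (.of_forall fun x => by
      rw [Real.norm_of_nonneg (sq_nonneg _)]
      exact sq_le_sq' (abs_le.mp (hB x)).1 (abs_le.mp (hB x)).2)
  have hαB : ∀ i, |α i| ≤ B := fun i => by
    obtain ⟨x, hx⟩ := hαatt i
    exact hx ▸ hB x
  have hE := fun n hn => mul_div_assoc (B ^ 2) C _ ▸
    abs_tsum_sq_mul_sub_le hαB hσsum (h61 n hn).1 (h61 n hn).2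
  obtain ⟨C', hC', hbound⟩ := exists_abs_sum_sq_mul_sub_mul_log_le hε.1 hE
  refine ⟨C', hC', fun p _ => ?_⟩
  rw [setIntegral_le_eq_sum_Icc hR hR₀pos (integrableOn_sq_mul_of_le hR hJ hJ2 p),
    Finset.sum_congr rfl fun n _ => setIntegral_sq_mul_eq_tsum hR hJ hαinj hJvals hJ2 n]
  exact hbound p

/-- Proposition 6.3: under Condition (6.1), with `σ_J² = ∑_i α_i² σ_i²`,
`∫_{R₀ ≤ p} (J R₀)² dμ_Δ = 2σ_J² log p + O(1)`. -/
theorem truncated_second_moment_JR0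
    -- the base probability space and its countable measurable partition
    {Z : Type*} [MeasurableSpace Z] (μZ : Measure Z) [IsProbabilityMeasure μZ]
    (P : ℕ → Set Z) (hPmeas : ∀ j, MeasurableSet (P j))
    (hPdisj : Pairwise (Function.onFun Disjoint P))
    (hPcover : (⋃ j, P j) = Set.univ)
    -- the base map: ergodic, measure-preserving, full-branch Gibbs--Markov
    (F : Z → Z) (hFmp : MeasurePreserving F μZ μZ) (hFerg : Ergodic F μZ)
    (hFfull : ∀ j, Set.BijOn F (P j) Set.univ)
    -- separation: `s(z,z') = ∞` iff `z = z'`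
    (hsep : ∀ z z', sepTime F P z z' = ⊤ → z = z')
    -- Gibbs--Markov distortion: `log ξ` is Lipschitz w.r.t. `d_θ`,
    -- where `ξ = dμ_Z/(dμ_Z ∘ F)`
    (θ : ℝ) (hθ : θ ∈ Set.Ioo (0:ℝ) 1) (ξ : Z → ℝ) (hξpos : ∀ z, 0 < ξ z)
    (hξjac : ∀ j, ∀ A : Set Z, MeasurableSet A → A ⊆ P j →
      μZ (F '' A) = ∫⁻ z in A, ENNReal.ofReal (ξ z)⁻¹ ∂μZ)
    (hξLip : ∃ CL : ℝ, ∀ z z',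
      |Real.log (ξ z) - Real.log (ξ z')| ≤ CL * sepDist F P θ z z')
    -- the return time: positive, constant on partition elements, exponential tails
    (τ : Z → ℕ) (hτmeas : Measurable τ) (hτpos : ∀ z, 0 < τ z)
    (hτconst : ∀ j, ∀ z ∈ P j, ∀ z' ∈ P j, τ z = τ z')
    (hτtail : ∃ c C₀ : ℝ, 0 < c ∧ 0 < C₀ ∧ ∀ n : ℕ,
      (μZ {z | n < τ z}).toReal ≤ C₀ * Real.exp (-c * n))
    -- the distinguished observable `R₀`: integrable, positive, piecewise constant
    (R₀ : TowerSet τ → ℕ) (hR₀pos : ∀ x, 0 < R₀ x)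
    (hR₀pc : PiecewiseConst P τ R₀)
    (hR₀int : Integrable (fun x => (R₀ x : ℝ)) (towerMeasure μZ τ))
    -- the observable `J`: bounded, piecewise constant, with (distinct) values `α i`
    (J : TowerSet τ → ℝ) (hJbd : ∃ B : ℝ, ∀ x, |J x| ≤ B)
    (hJpc : PiecewiseConst P τ J)
    (I : Type*) [Countable I] (α : I → ℝ) (hαinj : Function.Injective α)
    (hJvals : ∀ x, ∃ i, J x = α i) (hαatt : ∀ i, ∃ x, J x = α i)
    -- Condition (6.1)
    (σ : I → ℝ) (hσnn : ∀ i, 0 ≤ σ i)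
    (hσsum : Summable (fun i => σ i ^ 2)) (hσpos : 0 < ∑' i, σ i ^ 2)
    (C ε : ℝ) (hC : 0 < C) (hε : ε ∈ Set.Ioo (0:ℝ) 1)
    (h61 : ∀ n : ℕ, 1 ≤ n →
      Summable (fun i =>
        |(towerMeasure μZ τ {x | R₀ x = n ∧ J x = α i}).toReal -
          2 * σ i ^ 2 / (n : ℝ) ^ 3|) ∧
      ∑' i, |(towerMeasure μZ τ {x | R₀ x = n ∧ J x = α i}).toReal -
          2 * σ i ^ 2 / (n : ℝ) ^ 3| ≤ C / (n : ℝ) ^ ((3:ℝ) + ε))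
    -- Condition (6.2)
    (h62 : ∀ k l n : ℕ, 1 ≤ k → 1 ≤ l → 1 ≤ n →
      (towerMeasure μZ τ
          {x | R₀ x = k ∧ R₀ ((towerMap F τ hτpos)^[n] x) = l}).toReal ≤
        C / ((k : ℝ) ^ ((2:ℝ) + ε) * (l : ℝ) ^ ((2:ℝ) + ε)))
    :
    ∃ C' : ℝ, 0 < C' ∧ ∀ p : ℕ, 1 ≤ p →
      |(∫ x in {x | R₀ x ≤ p}, (J x * (R₀ x : ℝ)) ^ 2 ∂(towerMeasure μZ τ)) -
          2 * (∑' i, α i ^ 2 * σ i ^ 2) * Real.log p| ≤ C' :=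
  truncated_second_moment_JR0_general μZ P hPmeas hPcover τ R₀ hR₀pos hR₀pc hR₀int J hJbd hJpc I α
    hαinj hJvals hαatt σ hσsum C ε hε h61
end
end

section
/- Let T > 0 and α* > 0. Let α : [−T,0] → ℝ be continuous with α(t) ≥ α* for all t ∈ [−T,0], and let u : [−T,0] → ℝ be differentiable with u(t) ≥ 0 and u'(t) = −u(t)² + α(t) for all t ∈ [−T,0]. If u(0) ≤ (1/2)·√α*, then u(t) ≤ (1/2)·√α* and u'(t) ≥ (3/4)·α* for all t ∈ [−T,0]; in particular, u is non-decreasing on [−T,0] and u(0) ≥ u(−T) + (3/4)·T·α*. -/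
/-!
Wherever `u = √α*/2` the equation gives `u' = α - α*/4 ≥ 3α*/4 > 0`, so the level `√α*/2` can
only be crossed upwards; running time backwards from `u 0 ≤ √α*/2`, the solution therefore stays
below it on all of `[-T, 0]`. There `u² ≤ α*/4`, hence `u' ≥ 3α*/4`, and the mean value
inequality gives the rest.
-/

open Set Real

theorem image_le_of_le_right_of_deriv_pos_boundary {u u' : ℝ → ℝ} {a b c : ℝ}
    (hu : ∀ t ∈ Icc a b, HasDerivWithinAt u (u' t) (Icc a b) t)
    (hb : u b ≤ c) (bound : ∀ t ∈ Ioc a b, u t = c → 0 < u' t) :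
    ∀ ⦃t⦄, t ∈ Icc a b → u t ≤ c := by
  have hneg : MapsTo Neg.neg (Icc (-b) (-a)) (Icc a b) := fun s hs =>
    ⟨by linarith [hs.2], by linarith [hs.1]⟩
  have hcont : ContinuousOn u (Icc a b) := fun t ht => (hu t ht).continuousWithinAt
  -- Reversing time turns this into the forward fencing theorem for `s ↦ u (-s)` on `[-b, -a]`.
  have hderiv :
      ∀ s ∈ Ico (-b) (-a), HasDerivWithinAt (fun s => u (-s)) (-u' (-s)) (Ici s) s := by
    intro s hs
    have hs' : -s ∈ Ioc a b := ⟨by linarith [hs.2], by linarith [hs.1]⟩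
    have hleft : HasDerivWithinAt u (u' (-s)) (Iic (-s)) (-s) :=
      (hu (-s) (Ioc_subset_Icc_self hs')).mono_of_mem_nhdsWithin (Icc_mem_nhdsLE_of_mem hs')
    simpa [Function.comp_def] using
      hleft.comp s (hasDerivWithinAt_neg s (Ici s)) fun x hx => show -x ≤ -s from neg_le_neg hx
  intro t ht
  simpa using image_le_of_deriv_right_lt_deriv_boundary (B := fun _ => c) (B' := 0)
    (hcont.comp continuousOn_neg hneg) hderiv (by simpa using hb) (fun _ => hasDerivAt_const _ _)
    (fun s hs heq => by simpa using bound (-s) ⟨by linarith [hs.2], by linarith [hs.1]⟩ heq)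
    (x := -t) ⟨by linarith [ht.2], by linarith [ht.1]⟩

theorem mul_sub_le_image_sub_of_le_hasDerivWithinAt {u u' : ℝ → ℝ} {a b k : ℝ}
    (hu : ∀ t ∈ Icc a b, HasDerivWithinAt u (u' t) (Icc a b) t)
    (hk : ∀ t ∈ Icc a b, k ≤ u' t) :
    ∀ x ∈ Icc a b, ∀ y ∈ Icc a b, x ≤ y → k * (y - x) ≤ u y - u x := by
  have hg : ∀ t ∈ Icc a b, HasDerivWithinAt (fun t => u t - k * t) (u' t - k) (Icc a b) t :=
    fun t ht => by simpa using (hu t ht).fun_sub ((hasDerivWithinAt_id t _).const_mul k)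
  have hmono : MonotoneOn (fun t => u t - k * t) (Icc a b) :=
    monotoneOn_of_hasDerivWithinAt_nonneg (convex_Icc a b)
      (fun t ht => (hg t ht).continuousWithinAt)
      (fun t ht => (hg t (interior_subset ht)).mono interior_subset)
      fun t ht => sub_nonneg.2 (hk t (interior_subset ht))
  intro x hx y hy hxy
  linarith [hmono hx hy hxy]

theorem three_quarters_le_neg_sq_add {αs x y : ℝ} (hαs : 0 ≤ αs) (hx₀ : 0 ≤ x)
    (hx : x ≤ 1 / 2 * √αs) (hy : αs ≤ y) : 3 / 4 * αs ≤ -x ^ 2 + y := by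
  nlinarith [sq_sqrt hαs, mul_self_le_mul_self hx₀ hx]

theorem riccati_lower_bound_general
    (T αs : ℝ) (hT : 0 < T) (hαs : 0 < αs) (α u : ℝ → ℝ)
    (hαge : ∀ t ∈ Set.Icc (-T) 0, αs ≤ α t)
    (hunn : ∀ t ∈ Set.Icc (-T) 0, 0 ≤ u t)
    (hu : ∀ t ∈ Set.Icc (-T) 0,
      HasDerivWithinAt u (-(u t) ^ 2 + α t) (Set.Icc (-T) 0) t)
    (h0 : u 0 ≤ 1 / 2 * Real.sqrt αs) :
    (∀ t ∈ Set.Icc (-T) 0,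
        u t ≤ 1 / 2 * Real.sqrt αs ∧ 3 / 4 * αs ≤ -(u t) ^ 2 + α t) ∧
      MonotoneOn u (Set.Icc (-T) 0) ∧
      u (-T) + 3 / 4 * T * αs ≤ u 0 := by
  have hle : ∀ t ∈ Icc (-T) 0, u t ≤ 1 / 2 * √αs :=
    image_le_of_le_right_of_deriv_pos_boundary hu h0 fun t ht heq => by
      have ht' := Ioc_subset_Icc_self ht
      linarith [three_quarters_le_neg_sq_add hαs.le (hunn t ht') heq.le (hαge t ht')]
  have hderiv : ∀ t ∈ Icc (-T) 0, 3 / 4 * αs ≤ -(u t) ^ 2 + α t := fun t ht =>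
    three_quarters_le_neg_sq_add hαs.le (hunn t ht) (hle t ht) (hαge t ht)
  have hincr := mul_sub_le_image_sub_of_le_hasDerivWithinAt hu hderiv
  refine ⟨fun t ht => ⟨hle t ht, hderiv t ht⟩, fun x hx y hy hxy => ?_, ?_⟩
  · nlinarith [hincr x hx y hy hxy]
  · have hend : -T ∈ Icc (-T) 0 := ⟨le_rfl, by linarith⟩
    linarith [hincr (-T) hend 0 (right_mem_Icc.2 hend.2) hend.2]

/-- Riccati comparison argument in the proof of Lemma 4.1: if `u ≥ 0` solves
`u' = -u² + α` on `[-T,0]` with `α ≥ α* > 0`, and `u(0) ≤ (1/2)√α*`, then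
`u(t) ≤ (1/2)√α*` and `u'(t) = -u(t)² + α(t) ≥ (3/4)α*` on `[-T,0]`; in particular
`u` is non-decreasing on `[-T,0]` and `u(0) ≥ u(-T) + (3/4)·T·α*`. -/
theorem riccati_lower_bound
    (T αs : ℝ) (hT : 0 < T) (hαs : 0 < αs) (α u : ℝ → ℝ)
    (hαc : ContinuousOn α (Set.Icc (-T) 0))
    (hαge : ∀ t ∈ Set.Icc (-T) 0, αs ≤ α t)
    (hunn : ∀ t ∈ Set.Icc (-T) 0, 0 ≤ u t)
    (hu : ∀ t ∈ Set.Icc (-T) 0,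
      HasDerivWithinAt u (-(u t) ^ 2 + α t) (Set.Icc (-T) 0) t)
    (h0 : u 0 ≤ 1 / 2 * Real.sqrt αs) :
    (∀ t ∈ Set.Icc (-T) 0,
        u t ≤ 1 / 2 * Real.sqrt αs ∧ 3 / 4 * αs ≤ -(u t) ^ 2 + α t) ∧
      MonotoneOn u (Set.Icc (-T) 0) ∧
      u (-T) + 3 / 4 * T * αs ≤ u 0 :=
  riccati_lower_bound_general T αs hT hαs α u hαge hunn hu h0
end

section
/- For every C₀ > 0 there exists C₁ > 0 such that the following holds for every ε ∈ (0,1]. Set A = ε^{-1}. Let K₀, K₁ : [−A,0] → (−∞,0] be continuous, and let u₀, u₁ : [−A,0] → [0,∞) be differentiable with u_i'(t) = −u_i(t)² − K_i(t) for all t ∈ [−A,0] (i = 0,1). If |K₀(t) − K₁(t)| ≤ C₀·((u₀(t) + u₁(t))·ε + ε²) for all t ∈ [−A,0], then |u₀(0) − u₁(0)| ≤ C₁·ε. -/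
/-!
The difference `w = u₀ - u₁` solves the linear equation `w' = -(u₀ + u₁) w + (K₁ - K₀)`, so with
the integrating factor `E t = exp ∫_b^t (u₀ + u₁)` one has `(w E)' = (K₁ - K₀) E`. As `E b = 1`
and `E > 0`, the mean value theorem yields `c ∈ (a, b)` with `(u₀ + u₁) E = E' ≤ 1 / (b - a)`
at `c`, hence `|w E| ≤ (u₀ + u₁) E ≤ 1 / (b - a)` there. On `[c, b]` the hypothesis on `K₀ - K₁`
and `E ≤ 1` bound `|(w E)'|` by `C ε E' + C ε²`, which integrates to `C ε + C ε² (b - a)`.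
For `[a, b] = [-ε⁻¹, 0]` all three terms are multiples of `ε`.
-/

open Set Real Topology

theorem abs_sub_le_sub_of_abs_deriv_right_le {f f' g g' : ℝ → ℝ} {a b : ℝ} (hab : a ≤ b)
    (hf : ContinuousOn f (Icc a b)) (hf' : ∀ x ∈ Ico a b, HasDerivWithinAt f (f' x) (Ici x) x)
    (hg : ContinuousOn g (Icc a b)) (hg' : ∀ x ∈ Ico a b, HasDerivWithinAt g (g' x) (Ici x) x)
    (bound : ∀ x ∈ Ico a b, |f' x| ≤ g' x) : |f b - f a| ≤ g b - g a :=
  image_norm_le_of_norm_deriv_right_le_deriv_boundary' (f := fun x => f x - f a)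
    (B := fun x => g x - g a) (hf.sub continuousOn_const) (fun x hx => (hf' x hx).sub_const _)
    (by simp) (hg.sub continuousOn_const) (fun x hx => (hg' x hx).sub_const _) bound
    (right_mem_Icc.2 hab)

theorem exists_hasDerivAt_le_div_of_nonneg {f f' : ℝ → ℝ} {a b : ℝ} (hab : a < b)
    (hf : ContinuousOn f (Icc a b)) (hf' : ∀ x ∈ Ioo a b, HasDerivAt f (f' x) x)
    (ha : 0 ≤ f a) : ∃ c ∈ Ioo a b, f' c ≤ f b / (b - a) := by
  obtain ⟨c, hc, hslope⟩ := exists_hasDerivAt_eq_slope f f' hab hf hf'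
  refine ⟨c, hc, hslope ▸ ?_⟩
  gcongr
  linarith

noncomputable def integratingFactor (s : ℝ → ℝ) (b t : ℝ) : ℝ :=
  exp (∫ τ in b..t, s τ)

section IntegratingFactor

variable {s : ℝ → ℝ} {a b t : ℝ}

theorem integratingFactor_pos : 0 < integratingFactor s b t :=
  exp_pos _

@[simp]
theorem integratingFactor_self : integratingFactor s b b = 1 := by
  simp [integratingFactor]

theorem integratingFactor_le_one (hs : ∀ τ ∈ Icc t b, 0 ≤ s τ) (htb : t ≤ b) :
    integratingFactor s b t ≤ 1 := by
  rw [integratingFactor, exp_le_one_iff, intervalIntegral.integral_symm, neg_nonpos]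
  exact intervalIntegral.integral_nonneg htb hs

theorem continuousOn_integratingFactor (hs : ContinuousOn s (Icc a b)) (hab : a ≤ b) :
    ContinuousOn (integratingFactor s b) (Icc a b) := by
  have hprim := intervalIntegral.continuousOn_primitive_interval' (μ := MeasureTheory.volume)
    (hs.mono (uIcc_of_le hab).subset).intervalIntegrable right_mem_uIcc
  rw [uIcc_of_le hab] at hprim
  exact continuous_exp.comp_continuousOn hprim

theorem hasDerivAt_integratingFactor (hs : ContinuousOn s (Icc a b)) (ht : t ∈ Ioo a b) :
    HasDerivAt (integratingFactor s b) (s t * integratingFactor s b t) t := by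
  have hnhds : Icc a b ∈ 𝓝 t := Icc_mem_nhds ht.1 ht.2
  have hprim : HasDerivAt (fun x => ∫ τ in b..x, s τ) (s t) t :=
    intervalIntegral.integral_hasDerivAt_right
      (hs.mono (uIcc_subset_Icc (right_mem_Icc.2 (ht.1.trans ht.2).le)
        (Ioo_subset_Icc_self ht))).intervalIntegrable
      ⟨Icc a b, hnhds, hs.aestronglyMeasurable measurableSet_Icc⟩ (hs.continuousAt hnhds)
  rw [mul_comm]
  exact hprim.exp

end IntegratingFactor

section Riccati

variable {K₀ K₁ u₀ u₁ : ℝ → ℝ} {a b : ℝ}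

theorem hasDerivAt_sub_mul_of_riccati {E : ℝ → ℝ} {t : ℝ}
    (h₀ : HasDerivAt u₀ (-(u₀ t) ^ 2 - K₀ t) t) (h₁ : HasDerivAt u₁ (-(u₁ t) ^ 2 - K₁ t) t)
    (hE : HasDerivAt E ((u₀ t + u₁ t) * E t) t) :
    HasDerivAt (fun τ => (u₀ τ - u₁ τ) * E τ) ((K₁ t - K₀ t) * E t) t := by
  refine ((h₀.sub h₁).mul hE).congr_deriv ?_
  simp only [Pi.sub_apply]
  ring

theorem abs_sub_mul_le_of_abs_sub_le {k₀ k₁ x e C ε : ℝ} (hC : 0 ≤ C)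
    (he₀ : 0 ≤ e) (he₁ : e ≤ 1) (hk : |k₀ - k₁| ≤ C * (x * ε + ε ^ 2)) :
    |(k₁ - k₀) * e| ≤ C * ε * (x * e) + C * ε ^ 2 := by
  have hε2 : C * ε ^ 2 * e ≤ C * ε ^ 2 := mul_le_of_le_one_right (by positivity) he₁
  calc |(k₁ - k₀) * e| = |k₀ - k₁| * e := by rw [abs_mul, abs_sub_comm, abs_of_nonneg he₀]
    _ ≤ C * (x * ε + ε ^ 2) * e := mul_le_mul_of_nonneg_right hk he₀
    _ ≤ C * ε * (x * e) + C * ε ^ 2 := by linarith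

theorem abs_sub_le_of_riccati {C ε : ℝ} (hab : a < b) (hC : 0 ≤ C) (hε : 0 ≤ ε)
    (hu₀ : ∀ t ∈ Icc a b, 0 ≤ u₀ t) (hu₁ : ∀ t ∈ Icc a b, 0 ≤ u₁ t)
    (hd₀ : ∀ t ∈ Icc a b, HasDerivWithinAt u₀ (-(u₀ t) ^ 2 - K₀ t) (Icc a b) t)
    (hd₁ : ∀ t ∈ Icc a b, HasDerivWithinAt u₁ (-(u₁ t) ^ 2 - K₁ t) (Icc a b) t)
    (hK : ∀ t ∈ Icc a b, |K₀ t - K₁ t| ≤ C * ((u₀ t + u₁ t) * ε + ε ^ 2)) :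
    |u₀ b - u₁ b| ≤ (b - a)⁻¹ + C * ε + C * ε ^ 2 * (b - a) := by
  set s : ℝ → ℝ := fun t => u₀ t + u₁ t
  set E := integratingFactor s b
  have hs₀ : ∀ t ∈ Icc a b, 0 ≤ s t := fun t ht => add_nonneg (hu₀ t ht) (hu₁ t ht)
  have hu₀c : ContinuousOn u₀ (Icc a b) := fun t ht => (hd₀ t ht).continuousWithinAt
  have hu₁c : ContinuousOn u₁ (Icc a b) := fun t ht => (hd₁ t ht).continuousWithinAt
  have hEc : ContinuousOn E (Icc a b) := continuousOn_integratingFactor (hu₀c.add hu₁c) hab.le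
  have hE' : ∀ t ∈ Ioo a b, HasDerivAt E (s t * E t) t := fun t ht =>
    hasDerivAt_integratingFactor (hu₀c.add hu₁c) ht
  have hG' : ∀ t ∈ Ioo a b,
      HasDerivAt (fun τ => (u₀ τ - u₁ τ) * E τ) ((K₁ t - K₀ t) * E t) t := fun t ht =>
    have hnhds : Icc a b ∈ 𝓝 t := Icc_mem_nhds ht.1 ht.2
    hasDerivAt_sub_mul_of_riccati ((hd₀ t (Ioo_subset_Icc_self ht)).hasDerivAt hnhds)
      ((hd₁ t (Ioo_subset_Icc_self ht)).hasDerivAt hnhds) (hE' t ht)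
  obtain ⟨c, hc, hcE⟩ := exists_hasDerivAt_le_div_of_nonneg hab hEc hE' integratingFactor_pos.le
  have hEb : E b = 1 := integratingFactor_self
  rw [hEb, one_div] at hcE
  have hcI : Icc c b ⊆ Icc a b := Icc_subset_Icc_left hc.1.le
  have hcO : Ico c b ⊆ Ioo a b := fun t ht => ⟨hc.1.trans_le ht.1, ht.2⟩
  have hstart : |(u₀ c - u₁ c) * E c| ≤ (b - a)⁻¹ := by
    have hw : |u₀ c - u₁ c| ≤ s c := by
      have h₀ := hu₀ c (Ioo_subset_Icc_self hc)
      have h₁ := hu₁ c (Ioo_subset_Icc_self hc)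
      exact abs_sub_le_iff.2 ⟨by linarith, by linarith⟩
    rw [abs_mul, abs_of_pos integratingFactor_pos]
    exact (mul_le_mul_of_nonneg_right hw integratingFactor_pos.le).trans hcE
  have hdrift : |(u₀ b - u₁ b) * E b - (u₀ c - u₁ c) * E c|
      ≤ (C * ε * E b + C * ε ^ 2 * b) - (C * ε * E c + C * ε ^ 2 * c) := by
    refine abs_sub_le_sub_of_abs_deriv_right_le (f := fun τ => (u₀ τ - u₁ τ) * E τ)
      (g := fun τ => C * ε * E τ + C * ε ^ 2 * τ) (g' := fun τ => C * ε * (s τ * E τ) + C * ε ^ 2)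
      hc.2.le (((hu₀c.sub hu₁c).mul hEc).mono hcI)
      (fun t ht => (hG' t (hcO ht)).hasDerivWithinAt) ?_ ?_ ?_
    · exact ((hEc.const_smul (C * ε)).add ((continuousOn_id.const_smul (C * ε ^ 2)))).mono hcI
    · exact fun t ht => (((hE' t (hcO ht)).const_mul (C * ε)).add
        ((hasDerivAt_id t).const_mul (C * ε ^ 2))).hasDerivWithinAt.congr_deriv (by simp)
    · intro t ht
      exact abs_sub_mul_le_of_abs_sub_le hC integratingFactor_pos.le
        (integratingFactor_le_one (fun τ hτ => hs₀ τ (hcI ⟨ht.1.trans hτ.1, hτ.2⟩)) ht.2.le)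
        (hK t (Ioo_subset_Icc_self (hcO ht)))
  have hEc0 : 0 ≤ C * ε * E c := by have := (integratingFactor_pos : 0 < E c); positivity
  have hca : C * ε ^ 2 * (b - c) ≤ C * ε ^ 2 * (b - a) := by gcongr; exact hc.1.le
  have htri := abs_sub_abs_le_abs_sub ((u₀ b - u₁ b) * E b) ((u₀ c - u₁ c) * E c)
  rw [hEb, mul_one] at htri hdrift
  linarith

end Riccati

theorem riccati_lipschitz_comparison_general
    (C₀ : ℝ) :
    ∃ C₁ : ℝ, 0 < C₁ ∧ ∀ ε : ℝ, ε ∈ Set.Ioc (0:ℝ) 1 → ∀ A : ℝ, A = ε⁻¹ →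
      ∀ K₀ K₁ u₀ u₁ : ℝ → ℝ,
        ContinuousOn K₀ (Set.Icc (-A) 0) → ContinuousOn K₁ (Set.Icc (-A) 0) →
        (∀ t ∈ Set.Icc (-A) 0, K₀ t ≤ 0) → (∀ t ∈ Set.Icc (-A) 0, K₁ t ≤ 0) →
        (∀ t ∈ Set.Icc (-A) 0, 0 ≤ u₀ t) → (∀ t ∈ Set.Icc (-A) 0, 0 ≤ u₁ t) →
        (∀ t ∈ Set.Icc (-A) 0,
          HasDerivWithinAt u₀ (-(u₀ t) ^ 2 - K₀ t) (Set.Icc (-A) 0) t) →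
        (∀ t ∈ Set.Icc (-A) 0,
          HasDerivWithinAt u₁ (-(u₁ t) ^ 2 - K₁ t) (Set.Icc (-A) 0) t) →
        (∀ t ∈ Set.Icc (-A) 0,
          |K₀ t - K₁ t| ≤ C₀ * ((u₀ t + u₁ t) * ε + ε ^ 2)) →
        |u₀ 0 - u₁ 0| ≤ C₁ * ε := by
  refine ⟨1 + 2 * |C₀|, by positivity, ?_⟩
  rintro ε ⟨hε, -⟩ A rfl K₀ K₁ u₀ u₁ - - - - hu₀ hu₁ hd₀ hd₁ hK
  have hK' : ∀ t ∈ Icc (-ε⁻¹) 0, |K₀ t - K₁ t| ≤ |C₀| * ((u₀ t + u₁ t) * ε + ε ^ 2) :=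
    fun t ht => (hK t ht).trans <| mul_le_mul_of_nonneg_right (le_abs_self C₀) <| by
      have := hu₀ t ht; have := hu₁ t ht; positivity
  have hbound := abs_sub_le_of_riccati (neg_lt_zero.2 (inv_pos.2 hε)) (abs_nonneg C₀) hε.le
    hu₀ hu₁ hd₀ hd₁ hK'
  have hε2 : ε ^ 2 * ε⁻¹ = ε := by field_simp
  rw [sub_neg_eq_add, zero_add, inv_inv, mul_assoc, hε2] at hbound
  linarith

/-- Analytic core of Theorem 4.4 (uniform `C^{1+Lip}` regularity of the foliations):
for nonnegative Riccati solutions `uᵢ' = -uᵢ² - Kᵢ` on `[-A,0]` with `A = ε⁻¹`,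
`Kᵢ ≤ 0`, and `|K₀ - K₁| ≤ C₀((u₀+u₁)ε + ε²)`, one has `|u₀(0) - u₁(0)| ≤ C₁ ε`. -/
theorem riccati_lipschitz_comparison
    (C₀ : ℝ) (hC₀ : 0 < C₀) :
    ∃ C₁ : ℝ, 0 < C₁ ∧ ∀ ε : ℝ, ε ∈ Set.Ioc (0:ℝ) 1 → ∀ A : ℝ, A = ε⁻¹ →
      ∀ K₀ K₁ u₀ u₁ : ℝ → ℝ,
        ContinuousOn K₀ (Set.Icc (-A) 0) → ContinuousOn K₁ (Set.Icc (-A) 0) →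
        (∀ t ∈ Set.Icc (-A) 0, K₀ t ≤ 0) → (∀ t ∈ Set.Icc (-A) 0, K₁ t ≤ 0) →
        (∀ t ∈ Set.Icc (-A) 0, 0 ≤ u₀ t) → (∀ t ∈ Set.Icc (-A) 0, 0 ≤ u₁ t) →
        (∀ t ∈ Set.Icc (-A) 0,
          HasDerivWithinAt u₀ (-(u₀ t) ^ 2 - K₀ t) (Set.Icc (-A) 0) t) →
        (∀ t ∈ Set.Icc (-A) 0,
          HasDerivWithinAt u₁ (-(u₁ t) ^ 2 - K₁ t) (Set.Icc (-A) 0) t) →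
        (∀ t ∈ Set.Icc (-A) 0,
          |K₀ t - K₁ t| ≤ C₀ * ((u₀ t + u₁ t) * ε + ε ^ 2)) →
        |u₀ 0 - u₁ 0| ≤ C₁ * ε :=
  riccati_lipschitz_comparison_general C₀
end

section
/- Let r ∈ (4,5) and set p = (r−1)/(2(r−3)), so p > 1. For every C₀ > 0 there exists C₁ > 0 such that the following holds for every ε ∈ (0,1]. Set A = ε^{-(r−1)/4}. Let K₀, K₁ : [−A,0] → (−∞,0] be continuous, and let u₀, u₁ : [−A,0] → [0,∞) be differentiable with u_i'(t) = −u_i(t)² − K_i(t) for all t ∈ [−A,0] (i = 0,1). If |K₀(t) − K₁(t)| ≤ C₀·((u₀(t)^{1/p} + u₁(t)^{1/p})·ε + ε²) for all t ∈ [−A,0], then |u₀(0) − u₁(0)| ≤ C₁·ε^{(r−1)/4}. -/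
/-!
With `W = ∫ u`, the integrating factor `exp W` makes a Riccati solution monotone:
`(u e^W)' = -K e^W ≥ 0`. Hence `u(a) e^{W(a) - W(b)} ≤ 1 / (b - a)` and `∫ u e^{W - W(b)} ≤ 1`;
the latter, with `x^q ≤ L^{1-q} x + L^{-q}`, gives `∫ u^q e^{W - W(b)} ≤ 2 L^{1-q}`.
For two solutions, `(u₀ - u₁) e^{W₀ + W₁}` has derivative `(K₁ - K₀) e^{W₀ + W₁}`, so
`u₀(0) - u₁(0)` is a boundary term of size `2 / A` plus an integral of size
`C₀ (4 ε A^{1-1/p} + ε² A)`. For `A = ε^{-(r-1)/4}` each is `O(ε^{(r-1)/4})`,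
the last one because `r ≤ 5`.
-/

open Set Real intervalIntegral

lemma rpow_le_self_add_one {x q : ℝ} (hx : 0 ≤ x) (hq0 : 0 ≤ q) (hq1 : q ≤ 1) :
    x ^ q ≤ x + 1 := by
  rcases le_total x 1 with h | h
  · linarith [rpow_le_one hx h hq0]
  · linarith [rpow_le_self_of_one_le h hq1]

lemma rpow_le_rpow_one_sub_mul_add {L x q : ℝ} (hL : 0 < L) (hx : 0 ≤ x) (hq0 : 0 ≤ q)
    (hq1 : q ≤ 1) : x ^ q ≤ L ^ (1 - q) * x + L ^ (-q) := by
  have h := rpow_le_self_add_one (mul_nonneg hL.le hx) hq0 hq1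
  rw [mul_rpow hL.le hx] at h
  have hLq : L ^ (-q) * L ^ q = 1 := by rw [← rpow_add hL]; simp
  calc x ^ q = L ^ (-q) * (L ^ q * x ^ q) := by rw [← mul_assoc, hLq, one_mul]
    _ ≤ L ^ (-q) * (L * x + 1) := by gcongr
    _ = L ^ (1 - q) * x + L ^ (-q) := by
      rw [sub_eq_add_neg, rpow_add hL, rpow_one]; ring

section Icc

variable {a b : ℝ}

lemma integral_eq_sub_of_hasDerivWithinAt_Icc (hab : a ≤ b) {f f' : ℝ → ℝ}
    (hf : ∀ t ∈ Icc a b, HasDerivWithinAt f (f' t) (Icc a b) t)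
    (hf' : ContinuousOn f' (Icc a b)) :
    ∫ t in a..b, f' t = f b - f a :=
  integral_eq_sub_of_hasDerivAt_of_le hab (HasDerivWithinAt.continuousOn hf)
    (fun t ht => (hf t (Ioo_subset_Icc_self ht)).hasDerivAt (Icc_mem_nhds ht.1 ht.2))
    (hf'.intervalIntegrable_of_Icc hab)

lemma monotoneOn_Icc_of_hasDerivWithinAt_nonneg {f f' : ℝ → ℝ}
    (hf : ∀ t ∈ Icc a b, HasDerivWithinAt f (f' t) (Icc a b) t)
    (hf' : ∀ t ∈ Icc a b, 0 ≤ f' t) : MonotoneOn f (Icc a b) :=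
  monotoneOn_of_hasDerivWithinAt_nonneg (convex_Icc a b)
    (HasDerivWithinAt.continuousOn hf)
    (fun t ht => by
      rw [interior_Icc] at ht ⊢
      exact (hf t (Ioo_subset_Icc_self ht)).mono Ioo_subset_Icc_self)
    (fun t ht => hf' t (interior_subset ht))

lemma hasDerivWithinAt_integral_Icc {u : ℝ → ℝ} (hu : ContinuousOn u (Icc a b)) {t : ℝ}
    (ht : t ∈ Icc a b) : HasDerivWithinAt (fun s => ∫ x in a..s, u x) (u t) (Icc a b) t := by
  have := Fact.mk ht
  exact integral_hasDerivWithinAt_right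
    ((hu.mono (Icc_subset_Icc le_rfl ht.2)).intervalIntegrable_of_Icc ht.1)
    (hu.stronglyMeasurableAtFilter_nhdsWithin measurableSet_Icc t) (hu t ht)

variable {u W K : ℝ → ℝ}

lemma integral_mul_exp_sub_le_one (hab : a ≤ b) (hu : ContinuousOn u (Icc a b))
    (hW : ∀ t ∈ Icc a b, HasDerivWithinAt W (u t) (Icc a b) t) :
    ∫ t in a..b, u t * exp (W t - W b) ≤ 1 := by
  have hWc : ContinuousOn W (Icc a b) := HasDerivWithinAt.continuousOn hW
  rw [integral_eq_sub_of_hasDerivWithinAt_Icc hab (f := fun t => exp (W t - W b))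
    (f' := fun t => u t * exp (W t - W b))
    (fun t ht => by simpa [mul_comm] using ((hW t ht).sub_const (W b)).exp)
    (hu.mul (hWc.sub continuousOn_const).rexp)]
  simp only [sub_self, exp_zero, sub_le_self_iff]
  positivity

lemma exp_sub_le_one_of_hasDerivWithinAt (hu : ∀ t ∈ Icc a b, 0 ≤ u t)
    (hW : ∀ t ∈ Icc a b, HasDerivWithinAt W (u t) (Icc a b) t) {t : ℝ} (ht : t ∈ Icc a b) :
    exp (W t - W b) ≤ 1 := by
  rw [exp_le_one_iff, sub_nonpos]
  exact monotoneOn_Icc_of_hasDerivWithinAt_nonneg hW hu ht (right_mem_Icc.2 (ht.1.trans ht.2))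
    ht.2

/-- The integrating factor `exp W` linearises the Riccati equation: `(u exp W)' = -K exp W`. -/
lemma riccati_monotoneOn_mul_exp (hK : ∀ t ∈ Icc a b, K t ≤ 0)
    (hu : ∀ t ∈ Icc a b, HasDerivWithinAt u (-(u t) ^ 2 - K t) (Icc a b) t)
    (hW : ∀ t ∈ Icc a b, HasDerivWithinAt W (u t) (Icc a b) t) :
    MonotoneOn (fun t => u t * exp (W t)) (Icc a b) := by
  refine monotoneOn_Icc_of_hasDerivWithinAt_nonneg (f' := fun t => -K t * exp (W t))
    (fun t ht => ?_) (fun t ht => mul_nonneg (neg_nonneg.2 (hK t ht)) (exp_pos _).le)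
  exact ((hu t ht).fun_mul (hW t ht).exp).congr_deriv (by ring)

lemma riccati_mul_exp_left_le (hab : a ≤ b) (hK : ∀ t ∈ Icc a b, K t ≤ 0)
    (hu : ∀ t ∈ Icc a b, HasDerivWithinAt u (-(u t) ^ 2 - K t) (Icc a b) t)
    (hW : ∀ t ∈ Icc a b, HasDerivWithinAt W (u t) (Icc a b) t) :
    (b - a) * (u a * exp (W a - W b)) ≤ 1 := by
  have hcu : ContinuousOn u (Icc a b) := HasDerivWithinAt.continuousOn hu
  have hWc : ContinuousOn W (Icc a b) := HasDerivWithinAt.continuousOn hW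
  have hle : ∀ t ∈ Icc a b, u a * exp (W a - W b) ≤ u t * exp (W t - W b) := fun t ht => by
    simp only [exp_sub, ← mul_div_assoc]
    exact div_le_div_of_nonneg_right
      (riccati_monotoneOn_mul_exp hK hu hW (left_mem_Icc.2 hab) ht ht.1) (exp_pos _).le
  calc (b - a) * (u a * exp (W a - W b))
      = ∫ _t in a..b, u a * exp (W a - W b) := by simp only [integral_const, smul_eq_mul]
    _ ≤ ∫ t in a..b, u t * exp (W t - W b) :=
      integral_mono_on hab intervalIntegrable_const
        ((hcu.mul (hWc.sub continuousOn_const).rexp).intervalIntegrable_of_Icc hab) hle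
    _ ≤ 1 := integral_mul_exp_sub_le_one hab hcu hW

lemma integral_rpow_mul_le {w : ℝ → ℝ} {q : ℝ} (hab : a < b) (hq0 : 0 ≤ q) (hq1 : q ≤ 1)
    (hu : ContinuousOn u (Icc a b)) (hw : ContinuousOn w (Icc a b))
    (hu0 : ∀ t ∈ Icc a b, 0 ≤ u t) (hw0 : ∀ t ∈ Icc a b, 0 ≤ w t)
    (hw1 : ∀ t ∈ Icc a b, w t ≤ 1) :
    ∫ t in a..b, u t ^ q * w t ≤ (b - a) ^ (1 - q) * ((∫ t in a..b, u t * w t) + 1) := by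
  set L := b - a
  have hL : 0 < L := sub_pos.2 hab
  have huw : IntervalIntegrable (fun t => u t * w t) MeasureTheory.volume a b :=
    (hu.mul hw).intervalIntegrable_of_Icc hab.le
  have hpt : ∀ t ∈ Icc a b, u t ^ q * w t ≤ L ^ (1 - q) * (u t * w t) + L ^ (-q) := by
    intro t ht
    calc u t ^ q * w t ≤ (L ^ (1 - q) * u t + L ^ (-q)) * w t :=
          mul_le_mul_of_nonneg_right (rpow_le_rpow_one_sub_mul_add hL (hu0 t ht) hq0 hq1)
            (hw0 t ht)
      _ ≤ L ^ (1 - q) * (u t * w t) + L ^ (-q) := by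
          nlinarith [hw1 t ht, rpow_pos_of_pos hL (-q)]
  calc ∫ t in a..b, u t ^ q * w t ≤ ∫ t in a..b, (L ^ (1 - q) * (u t * w t) + L ^ (-q)) :=
        integral_mono_on hab.le
          (((hu.rpow_const fun _ _ => Or.inr hq0).mul hw).intervalIntegrable_of_Icc hab.le)
          ((huw.const_mul _).add intervalIntegrable_const) hpt
    _ = L ^ (1 - q) * ((∫ t in a..b, u t * w t) + 1) := by
        rw [integral_add (huw.const_mul _) intervalIntegrable_const, integral_const_mul,
          integral_const, smul_eq_mul, sub_eq_add_neg 1 q, rpow_add hL, rpow_one]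
        ring

lemma integral_rpow_mul_exp_sub_le {q : ℝ} (hab : a < b) (hq0 : 0 ≤ q) (hq1 : q ≤ 1)
    (hu : ContinuousOn u (Icc a b)) (hu0 : ∀ t ∈ Icc a b, 0 ≤ u t)
    (hW : ∀ t ∈ Icc a b, HasDerivWithinAt W (u t) (Icc a b) t) :
    ∫ t in a..b, u t ^ q * exp (W t - W b) ≤ 2 * (b - a) ^ (1 - q) := by
  have hWc : ContinuousOn W (Icc a b) := HasDerivWithinAt.continuousOn hW
  calc ∫ t in a..b, u t ^ q * exp (W t - W b)
      ≤ (b - a) ^ (1 - q) * ((∫ t in a..b, u t * exp (W t - W b)) + 1) :=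
        integral_rpow_mul_le hab hq0 hq1 hu (hWc.sub continuousOn_const).rexp hu0
          (fun _ _ => (exp_pos _).le) (fun _ ht => exp_sub_le_one_of_hasDerivWithinAt hu0 hW ht)
    _ ≤ (b - a) ^ (1 - q) * (1 + 1) := by
        gcongr
        exact integral_mul_exp_sub_le_one hab.le hu hW
    _ = 2 * (b - a) ^ (1 - q) := by ring

/-- With `E = exp (W₀ - W₀ b) * exp (W₁ - W₁ b)`, one has `((u₀ - u₁) E)' = (K₁ - K₀) E`:
the quadratic terms cancel because `u₀² - u₁² = (u₀ - u₁)(u₀ + u₁)`. -/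
lemma riccati_sub_eq {u₀ u₁ K₀ K₁ W₀ W₁ : ℝ → ℝ} (hab : a ≤ b)
    (hK₀ : ContinuousOn K₀ (Icc a b)) (hK₁ : ContinuousOn K₁ (Icc a b))
    (hu₀ : ∀ t ∈ Icc a b, HasDerivWithinAt u₀ (-(u₀ t) ^ 2 - K₀ t) (Icc a b) t)
    (hu₁ : ∀ t ∈ Icc a b, HasDerivWithinAt u₁ (-(u₁ t) ^ 2 - K₁ t) (Icc a b) t)
    (hW₀ : ∀ t ∈ Icc a b, HasDerivWithinAt W₀ (u₀ t) (Icc a b) t)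
    (hW₁ : ∀ t ∈ Icc a b, HasDerivWithinAt W₁ (u₁ t) (Icc a b) t) :
    u₀ b - u₁ b = (u₀ a - u₁ a) * (exp (W₀ a - W₀ b) * exp (W₁ a - W₁ b)) +
      ∫ t in a..b, (K₁ t - K₀ t) * (exp (W₀ t - W₀ b) * exp (W₁ t - W₁ b)) := by
  have hW₀c : ContinuousOn W₀ (Icc a b) := HasDerivWithinAt.continuousOn hW₀
  have hW₁c : ContinuousOn W₁ (Icc a b) := HasDerivWithinAt.continuousOn hW₁
  have hFTC := integral_eq_sub_of_hasDerivWithinAt_Icc hab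
    (f := fun t => (u₀ t - u₁ t) * (exp (W₀ t - W₀ b) * exp (W₁ t - W₁ b)))
    (f' := fun t => (K₁ t - K₀ t) * (exp (W₀ t - W₀ b) * exp (W₁ t - W₁ b)))
    (fun t ht => (((hu₀ t ht).fun_sub (hu₁ t ht)).fun_mul
      ((((hW₀ t ht).sub_const _).exp).fun_mul (((hW₁ t ht).sub_const _).exp))).congr_deriv
      (by ring))
    ((hK₁.sub hK₀).mul
      ((hW₀c.sub continuousOn_const).rexp.mul (hW₁c.sub continuousOn_const).rexp))
  simp only [sub_self, exp_zero, mul_one] at hFTC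
  linarith

lemma abs_sub_mul_mul_le {x y s t : ℝ} (hx : 0 ≤ x) (hy : 0 ≤ y) (hs0 : 0 ≤ s) (hs1 : s ≤ 1)
    (ht0 : 0 ≤ t) (ht1 : t ≤ 1) : |x - y| * (s * t) ≤ x * s + y * t := by
  have hxy : |x - y| ≤ x + y := abs_sub_le_iff.2 ⟨by linarith, by linarith⟩
  calc |x - y| * (s * t) ≤ (x + y) * (s * t) := by gcongr
    _ = x * s * t + y * t * s := by ring
    _ ≤ x * s + y * t := by
        nlinarith [mul_nonneg (mul_nonneg hx hs0) (sub_nonneg.2 ht1),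
          mul_nonneg (mul_nonneg hy ht0) (sub_nonneg.2 hs1)]

lemma abs_integral_mul_exp_mul_exp_le {u₀ u₁ W₀ W₁ F : ℝ → ℝ} {q C ε : ℝ} (hab : a < b)
    (hq0 : 0 ≤ q) (hq1 : q ≤ 1) (hC : 0 ≤ C) (hε : 0 ≤ ε)
    (hu₀ : ContinuousOn u₀ (Icc a b)) (hu₁ : ContinuousOn u₁ (Icc a b))
    (hu₀0 : ∀ t ∈ Icc a b, 0 ≤ u₀ t) (hu₁0 : ∀ t ∈ Icc a b, 0 ≤ u₁ t)
    (hW₀ : ∀ t ∈ Icc a b, HasDerivWithinAt W₀ (u₀ t) (Icc a b) t)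
    (hW₁ : ∀ t ∈ Icc a b, HasDerivWithinAt W₁ (u₁ t) (Icc a b) t)
    (hF : ContinuousOn F (Icc a b))
    (hFle : ∀ t ∈ Icc a b, |F t| ≤ C * ((u₀ t ^ q + u₁ t ^ q) * ε + ε ^ 2)) :
    |∫ t in a..b, F t * (exp (W₀ t - W₀ b) * exp (W₁ t - W₁ b))|
      ≤ C * (4 * ε * (b - a) ^ (1 - q) + ε ^ 2 * (b - a)) := by
  set e₀ := fun t => exp (W₀ t - W₀ b)
  set e₁ := fun t => exp (W₁ t - W₁ b)
  have he₀ : ContinuousOn e₀ (Icc a b) :=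
    ((HasDerivWithinAt.continuousOn hW₀).sub continuousOn_const).rexp
  have he₁ : ContinuousOn e₁ (Icc a b) :=
    ((HasDerivWithinAt.continuousOn hW₁).sub continuousOn_const).rexp
  have hI₀ : IntervalIntegrable (fun t => C * ε * (u₀ t ^ q * e₀ t)) MeasureTheory.volume a b :=
    (continuousOn_const.mul ((hu₀.rpow_const fun _ _ => Or.inr hq0).mul he₀)
      ).intervalIntegrable_of_Icc hab.le
  have hI₁ : IntervalIntegrable (fun t => C * ε * (u₁ t ^ q * e₁ t)) MeasureTheory.volume a b :=
    (continuousOn_const.mul ((hu₁.rpow_const fun _ _ => Or.inr hq0).mul he₁)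
      ).intervalIntegrable_of_Icc hab.le
  have hpt : ∀ t ∈ Icc a b, |F t * (e₀ t * e₁ t)|
      ≤ C * ε * (u₀ t ^ q * e₀ t) + C * ε * (u₁ t ^ q * e₁ t) + C * ε ^ 2 := by
    intro t ht
    have h₀ : e₀ t ≤ 1 := exp_sub_le_one_of_hasDerivWithinAt hu₀0 hW₀ ht
    have h₁ : e₁ t ≤ 1 := exp_sub_le_one_of_hasDerivWithinAt hu₁0 hW₁ ht
    have hx₀ : 0 ≤ u₀ t ^ q := rpow_nonneg (hu₀0 t ht) q
    have hx₁ : 0 ≤ u₁ t ^ q := rpow_nonneg (hu₁0 t ht) q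
    have he : 0 < e₀ t * e₁ t := mul_pos (exp_pos _) (exp_pos _)
    rw [abs_mul, abs_of_pos he]
    calc |F t| * (e₀ t * e₁ t) ≤ C * ((u₀ t ^ q + u₁ t ^ q) * ε + ε ^ 2) * (e₀ t * e₁ t) :=
          mul_le_mul_of_nonneg_right (hFle t ht) he.le
      _ ≤ _ := by
          have hCε : 0 ≤ C * ε := mul_nonneg hC hε
          nlinarith [mul_nonneg (mul_nonneg hCε (mul_nonneg hx₀ (exp_pos (W₀ t - W₀ b)).le))
              (sub_nonneg.2 h₁),
            mul_nonneg (mul_nonneg hCε (mul_nonneg hx₁ (exp_pos (W₁ t - W₁ b)).le))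
              (sub_nonneg.2 h₀),
            mul_nonneg (mul_nonneg hC (sq_nonneg ε)) (sub_nonneg.2 (mul_le_one₀ h₀ (exp_pos _).le h₁))]
  calc |∫ t in a..b, F t * (e₀ t * e₁ t)| ≤ ∫ t in a..b, |F t * (e₀ t * e₁ t)| :=
        abs_integral_le_integral_abs hab.le
    _ ≤ ∫ t in a..b, (C * ε * (u₀ t ^ q * e₀ t) + C * ε * (u₁ t ^ q * e₁ t) + C * ε ^ 2) :=
        integral_mono_on hab.le
          ((hF.mul (he₀.mul he₁)).abs.intervalIntegrable_of_Icc hab.le)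
          ((hI₀.add hI₁).add intervalIntegrable_const) hpt
    _ = C * ε * (∫ t in a..b, u₀ t ^ q * e₀ t) + C * ε * (∫ t in a..b, u₁ t ^ q * e₁ t)
          + C * ε ^ 2 * (b - a) := by
        rw [integral_add (hI₀.add hI₁) intervalIntegrable_const, integral_add hI₀ hI₁,
          integral_const_mul, integral_const_mul, integral_const, smul_eq_mul, mul_comm (b - a)]
    _ ≤ C * ε * (2 * (b - a) ^ (1 - q)) + C * ε * (2 * (b - a) ^ (1 - q))
          + C * ε ^ 2 * (b - a) := by
        gcongr
        · exact integral_rpow_mul_exp_sub_le hab hq0 hq1 hu₀ hu₀0 hW₀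
        · exact integral_rpow_mul_exp_sub_le hab hq0 hq1 hu₁ hu₁0 hW₁
    _ = C * (4 * ε * (b - a) ^ (1 - q) + ε ^ 2 * (b - a)) := by ring

theorem riccati_abs_sub_le {u₀ u₁ K₀ K₁ : ℝ → ℝ} {q C ε : ℝ} (hab : a < b)
    (hq0 : 0 ≤ q) (hq1 : q ≤ 1) (hC : 0 ≤ C) (hε : 0 ≤ ε)
    (hK₀c : ContinuousOn K₀ (Icc a b)) (hK₁c : ContinuousOn K₁ (Icc a b))
    (hK₀ : ∀ t ∈ Icc a b, K₀ t ≤ 0) (hK₁ : ∀ t ∈ Icc a b, K₁ t ≤ 0)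
    (hu₀0 : ∀ t ∈ Icc a b, 0 ≤ u₀ t) (hu₁0 : ∀ t ∈ Icc a b, 0 ≤ u₁ t)
    (hu₀ : ∀ t ∈ Icc a b, HasDerivWithinAt u₀ (-(u₀ t) ^ 2 - K₀ t) (Icc a b) t)
    (hu₁ : ∀ t ∈ Icc a b, HasDerivWithinAt u₁ (-(u₁ t) ^ 2 - K₁ t) (Icc a b) t)
    (hKK : ∀ t ∈ Icc a b, |K₀ t - K₁ t| ≤ C * ((u₀ t ^ q + u₁ t ^ q) * ε + ε ^ 2)) :
    |u₀ b - u₁ b| ≤ 2 / (b - a) + C * (4 * ε * (b - a) ^ (1 - q) + ε ^ 2 * (b - a)) := by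
  have hu₀c := HasDerivWithinAt.continuousOn hu₀
  have hu₁c := HasDerivWithinAt.continuousOn hu₁
  have hW₀ := fun t (ht : t ∈ Icc a b) => hasDerivWithinAt_integral_Icc hu₀c ht
  have hW₁ := fun t (ht : t ∈ Icc a b) => hasDerivWithinAt_integral_Icc hu₁c ht
  rw [riccati_sub_eq hab.le hK₀c hK₁c hu₀ hu₁ hW₀ hW₁]
  refine (abs_add_le _ _).trans (add_le_add ?_ ?_)
  · have hL : 0 < b - a := sub_pos.2 hab
    have ha : a ∈ Icc a b := left_mem_Icc.2 hab.le
    rw [abs_mul, abs_of_pos (mul_pos (exp_pos _) (exp_pos _))]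
    calc _ ≤ _ := abs_sub_mul_mul_le (hu₀0 a ha) (hu₁0 a ha)
          (exp_pos _).le (exp_sub_le_one_of_hasDerivWithinAt hu₀0 hW₀ ha)
          (exp_pos _).le (exp_sub_le_one_of_hasDerivWithinAt hu₁0 hW₁ ha)
      _ ≤ 1 / (b - a) + 1 / (b - a) :=
          add_le_add ((le_div_iff₀' hL).2 (riccati_mul_exp_left_le hab.le hK₀ hu₀ hW₀))
            ((le_div_iff₀' hL).2 (riccati_mul_exp_left_le hab.le hK₁ hu₁ hW₁))
      _ = 2 / (b - a) := by ring
  · exact abs_integral_mul_exp_mul_exp_le hab hq0 hq1 hC hε hu₀c hu₁c hu₀0 hu₁0 hW₀ hW₁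
      (hK₁c.sub hK₀c) fun t ht => (abs_sub_comm _ _).trans_le (hKK t ht)

end Icc

/-- Content of the Remark following Theorem 4.4 (`C^{1+(r-1)/4}` regularity for
`r ∈ (4,5)`): for nonnegative Riccati solutions `uᵢ' = -uᵢ² - Kᵢ` on `[-A,0]` with
`A = ε^{-(r-1)/4}`, `Kᵢ ≤ 0`, and `|K₀ - K₁| ≤ C₀((u₀^{1/p} + u₁^{1/p})ε + ε²)` where
`p = (r-1)/(2(r-3))`, one has `|u₀(0) - u₁(0)| ≤ C₁ ε^{(r-1)/4}`. -/
theorem riccati_holder_comparison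
    (r : ℝ) (hr : r ∈ Set.Ioo (4:ℝ) 5) (p : ℝ) (hp : p = (r - 1) / (2 * (r - 3)))
    (C₀ : ℝ) (hC₀ : 0 < C₀) :
    ∃ C₁ : ℝ, 0 < C₁ ∧ ∀ ε : ℝ, ε ∈ Set.Ioc (0:ℝ) 1 →
      ∀ A : ℝ, A = ε ^ (-((r - 1) / 4)) →
      ∀ K₀ K₁ u₀ u₁ : ℝ → ℝ,
        ContinuousOn K₀ (Set.Icc (-A) 0) → ContinuousOn K₁ (Set.Icc (-A) 0) →
        (∀ t ∈ Set.Icc (-A) 0, K₀ t ≤ 0) → (∀ t ∈ Set.Icc (-A) 0, K₁ t ≤ 0) →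
        (∀ t ∈ Set.Icc (-A) 0, 0 ≤ u₀ t) → (∀ t ∈ Set.Icc (-A) 0, 0 ≤ u₁ t) →
        (∀ t ∈ Set.Icc (-A) 0,
          HasDerivWithinAt u₀ (-(u₀ t) ^ 2 - K₀ t) (Set.Icc (-A) 0) t) →
        (∀ t ∈ Set.Icc (-A) 0,
          HasDerivWithinAt u₁ (-(u₁ t) ^ 2 - K₁ t) (Set.Icc (-A) 0) t) →
        (∀ t ∈ Set.Icc (-A) 0,
          |K₀ t - K₁ t| ≤ C₀ * ((u₀ t ^ (1 / p) + u₁ t ^ (1 / p)) * ε + ε ^ 2)) →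
        |u₀ 0 - u₁ 0| ≤ C₁ * ε ^ ((r - 1) / 4) := by
  obtain ⟨hr4, hr5⟩ := hr
  refine ⟨5 * C₀ + 2, by linarith, ?_⟩
  rintro ε ⟨hε0, hε1⟩ A hA K₀ K₁ u₀ u₁ hK₀c hK₁c hK₀ hK₁ hu₀0 hu₁0 hu₀ hu₁ hKK
  have hr1 : r - 1 ≠ 0 := by linarith
  have hq : 1 / p = 2 * (r - 3) / (r - 1) := by rw [hp, one_div_div]
  have hA0 : 0 < A := hA ▸ rpow_pos_of_pos hε0 _
  have hbound := riccati_abs_sub_le (neg_neg_of_pos hA0) (q := 1 / p)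
    (by rw [hq]; exact div_nonneg (by linarith) (by linarith)) (by rw [hq, div_le_one (by linarith)]; linarith) hC₀.le hε0.le
    hK₀c hK₁c hK₀ hK₁ hu₀0 hu₁0 hu₀ hu₁ hKK
  rw [sub_neg_eq_add, zero_add] at hbound
  have hinv : 2 / A = 2 * ε ^ ((r - 1) / 4) := by
    rw [hA, div_eq_mul_inv, ← rpow_neg hε0.le, neg_neg]
  have hmain : ε * A ^ (1 - 1 / p) = ε ^ ((r - 1) / 4) := by
    rw [hA, ← rpow_mul hε0.le, ← rpow_one_add' hε0.le]
    · congr 1; rw [hq]; field_simp; ring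
    · rw [hq]; field_simp; nlinarith
  have hsq : ε ^ 2 * A ≤ ε ^ ((r - 1) / 4) := by
    rw [hA, ← rpow_two, ← rpow_add hε0]
    exact rpow_le_rpow_of_exponent_ge hε0 hε1 (by linarith)
  calc |u₀ 0 - u₁ 0| ≤ 2 / A + C₀ * (4 * ε * A ^ (1 - 1 / p) + ε ^ 2 * A) := hbound
    _ ≤ 2 * ε ^ ((r - 1) / 4) + C₀ * (4 * ε ^ ((r - 1) / 4) + ε ^ ((r - 1) / 4)) := by
        rw [hinv, mul_assoc 4, hmain]; gcongr
    _ = (5 * C₀ + 2) * ε ^ ((r - 1) / 4) := by ring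
end

section
/- Fix r > 4 and δ > 0, and define k : [0,δ] → ℝ by k(a) = r(r−1)·a^{r−2} / ((1 + a^r)·(1 + r²·a^{2(r−1)})²). Then there exists a constant C > 0 such that |k(a₀) − k(a₁)| ≤ C · max{k(a₀), k(a₁)}^{(r−3)/(r−2)} · |a₀ − a₁| for all a₀, a₁ ∈ [0,δ]. -/
/-
Write `k(a) = c · a^(r-2) / g(a)` with `c = r(r-1)` and `g(a) = (1 + a^r)(1 + r² a^(2(r-1)))²`.
On `[0, δ]` the denominator satisfies `1 ≤ g ≤ M` and, being `C¹`, is Lipschitz. With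
`m = max a₀ a₁`, the mean value bound for `a ↦ a^(r-2)` and `a^(r-2) ≤ δ a^(r-3)` give
`|k(a₀) - k(a₁)| ≲ m^(r-3) |a₀ - a₁|`. Conversely `max (k a₀) (k a₁) ≥ k(m) ≥ (c/M) m^(r-2)`,
and `m^(r-3) = (m^(r-2))^((r-3)/(r-2))`.
-/

open Set Real

noncomputable section

lemma abs_rpow_sub_rpow_le {p : ℝ} (hp : 1 ≤ p) {x y : ℝ} (hx : 0 ≤ x) (hy : 0 ≤ y) :
    |x ^ p - y ^ p| ≤ p * max x y ^ (p - 1) * |x - y| := by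
  have hderiv : ∀ t ∈ Icc 0 (max x y),
      HasDerivWithinAt (fun s : ℝ => s ^ p) (p * t ^ (p - 1)) (Icc 0 (max x y)) t :=
    fun _ _ => (hasDerivAt_rpow_const (Or.inr hp)).hasDerivWithinAt
  have hbound : ∀ t ∈ Icc 0 (max x y), ‖p * t ^ (p - 1)‖ ≤ p * max x y ^ (p - 1) := by
    intro t ht
    rw [Real.norm_eq_abs, abs_of_nonneg (mul_nonneg (by linarith) (rpow_nonneg ht.1 _))]
    exact mul_le_mul_of_nonneg_left (rpow_le_rpow ht.1 ht.2 (by linarith)) (by linarith)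
  simpa [Real.norm_eq_abs] using
    (convex_Icc 0 (max x y)).norm_image_sub_le_of_norm_hasDerivWithin_le
      hderiv hbound ⟨hy, le_max_right x y⟩ ⟨hx, le_max_left x y⟩

lemma abs_div_sub_div_le_of_one_le {f₀ f₁ g₀ g₁ : ℝ} (hf₁ : 0 ≤ f₁) (hg₀ : 1 ≤ g₀)
    (hg₁ : 1 ≤ g₁) : |f₀ / g₀ - f₁ / g₁| ≤ |f₀ - f₁| + f₁ * |g₀ - g₁| := by
  have hg : 1 ≤ g₀ * g₁ := one_le_mul_of_one_le_of_one_le hg₀ hg₁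
  have hsplit : f₀ / g₀ - f₁ / g₁ = (f₀ - f₁) / g₀ + f₁ * ((g₁ - g₀) / (g₀ * g₁)) := by
    field_simp
    ring
  calc |f₀ / g₀ - f₁ / g₁| ≤ |(f₀ - f₁) / g₀| + f₁ * |(g₁ - g₀) / (g₀ * g₁)| := by
        rw [hsplit, ← abs_of_nonneg hf₁, ← abs_mul, abs_of_nonneg hf₁]
        exact abs_add_le _ _
    _ ≤ |f₀ - f₁| + f₁ * |g₀ - g₁| := by
        rw [abs_div, abs_div, abs_of_pos (by linarith : 0 < g₀),
          abs_of_pos (by linarith : 0 < g₀ * g₁), abs_sub_comm g₁]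
        exact add_le_add (div_le_self (abs_nonneg _) hg₀)
          (mul_le_mul_of_nonneg_left (div_le_self (abs_nonneg _) hg) hf₁)

/-- Minus the Gauss curvature on the neck of the surface of revolution with profile
`ξ(s) = 1 + (s - L)^r`, as a function of the distance `a = s - L` from the flat
cylinder: `k(a) = ξ''/(ξ(1+ξ'²)²)` with `ξ' = r a^{r-1}`, `ξ'' = r(r-1) a^{r-2}`. -/
def neckCurv (r : ℝ) (a : ℝ) : ℝ :=
  r * (r - 1) * a ^ (r - 2) / ((1 + a ^ r) * (1 + r ^ 2 * a ^ (2 * (r - 1))) ^ 2)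

namespace NeckCurv

def denom (r a : ℝ) : ℝ :=
  (1 + a ^ r) * (1 + r ^ 2 * a ^ (2 * (r - 1))) ^ 2

lemma neckCurv_eq (r a : ℝ) : neckCurv r a = r * (r - 1) * (a ^ (r - 2) / denom r a) :=
  mul_div_assoc _ _ _

lemma one_le_denom (r : ℝ) {a : ℝ} (ha : 0 ≤ a) : 1 ≤ denom r a := by
  have h₁ : 0 ≤ a ^ r := rpow_nonneg ha r
  have h₂ : 0 ≤ r ^ 2 * a ^ (2 * (r - 1)) := mul_nonneg (sq_nonneg r) (rpow_nonneg ha _)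
  exact one_le_mul_of_one_le_of_one_le (by linarith) (one_le_pow₀ (by linarith))

lemma neckCurv_nonneg {r a : ℝ} (hr : 1 ≤ r) (ha : 0 ≤ a) : 0 ≤ neckCurv r a := by
  rw [neckCurv_eq]
  have := one_le_denom r ha
  have := rpow_nonneg ha (r - 2)
  exact mul_nonneg (mul_nonneg (by linarith) (by linarith)) (by positivity)

lemma contDiff_denom {r : ℝ} (hr : 3 / 2 ≤ r) : ContDiff ℝ 1 (denom r) := by
  have hpow : ∀ {p : ℝ}, 1 ≤ p → ContDiff ℝ 1 (fun a : ℝ => a ^ p) := fun hp =>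
    contDiff_rpow_const_of_le (by exact_mod_cast hp)
  exact (contDiff_const.add (hpow (by linarith))).mul
    ((contDiff_const.add (contDiff_const.mul (hpow (by linarith)))).pow 2)

variable {r δ a₀ a₁ : ℝ}

lemma abs_neckCurv_sub_le (hr : 3 ≤ r) {L : NNReal}
    (hL : LipschitzOnWith L (denom r) (Icc 0 δ)) (ha₀ : a₀ ∈ Icc 0 δ) (ha₁ : a₁ ∈ Icc 0 δ) :
    |neckCurv r a₀ - neckCurv r a₁| ≤
      r * (r - 1) * ((r - 2) + δ * L) * max a₀ a₁ ^ (r - 3) * |a₀ - a₁| := by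
  set m := max a₀ a₁
  have hδ : 0 ≤ δ := ha₀.1.trans ha₀.2
  have hm : 0 ≤ m := ha₀.1.trans (le_max_left _ _)
  have hm₃ : 0 ≤ m ^ (r - 3) := rpow_nonneg hm _
  have hnum : |a₀ ^ (r - 2) - a₁ ^ (r - 2)| ≤ (r - 2) * m ^ (r - 3) * |a₀ - a₁| := by
    have := abs_rpow_sub_rpow_le (p := r - 2) (by linarith) ha₀.1 ha₁.1
    rwa [show r - 2 - 1 = r - 3 by ring] at this
  have hnum₁ : a₁ ^ (r - 2) ≤ δ * m ^ (r - 3) := calc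
    a₁ ^ (r - 2) ≤ m ^ (r - 2) := rpow_le_rpow ha₁.1 (le_max_right _ _) (by linarith)
    _ = m * m ^ (r - 3) := by
        rw [show r - 2 = 1 + (r - 3) by ring, rpow_add' hm (by linarith), rpow_one]
    _ ≤ δ * m ^ (r - 3) := by gcongr; exact max_le ha₀.2 ha₁.2
  have hden : |denom r a₀ - denom r a₁| ≤ L * |a₀ - a₁| := by
    simpa [Real.dist_eq] using hL.dist_le_mul a₀ ha₀ a₁ ha₁
  have hquot := abs_div_sub_div_le_of_one_le (f₀ := a₀ ^ (r - 2)) (rpow_nonneg ha₁.1 (r - 2))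
    (one_le_denom r ha₀.1) (one_le_denom r ha₁.1)
  have hc : 0 ≤ r * (r - 1) := by nlinarith
  rw [neckCurv_eq, neckCurv_eq, ← mul_sub, abs_mul, abs_of_nonneg hc]
  calc r * (r - 1) * |a₀ ^ (r - 2) / denom r a₀ - a₁ ^ (r - 2) / denom r a₁|
      ≤ r * (r - 1) *
          ((r - 2) * m ^ (r - 3) * |a₀ - a₁| + δ * m ^ (r - 3) * (L * |a₀ - a₁|)) := by
        refine mul_le_mul_of_nonneg_left (hquot.trans (add_le_add hnum ?_)) hc
        exact mul_le_mul hnum₁ hden (abs_nonneg _) (mul_nonneg hδ hm₃)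
    _ = r * (r - 1) * ((r - 2) + δ * L) * m ^ (r - 3) * |a₀ - a₁| := by ring

lemma max_rpow_le_mul_max_neckCurv (hr : 1 < r) {M : ℝ} (hM : ∀ a ∈ Icc 0 δ, denom r a ≤ M)
    (ha₀ : a₀ ∈ Icc 0 δ) (ha₁ : a₁ ∈ Icc 0 δ) :
    max a₀ a₁ ^ (r - 2) ≤ M / (r * (r - 1)) * max (neckCurv r a₀) (neckCurv r a₁) := by
  have hc : 0 < r * (r - 1) := by nlinarith
  have key : ∀ a ∈ Icc 0 δ, a ^ (r - 2) ≤ M / (r * (r - 1)) * neckCurv r a := by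
    intro a ha
    have hg : 0 < denom r a := one_pos.trans_le (one_le_denom r ha.1)
    calc a ^ (r - 2) ≤ a ^ (r - 2) * (M / denom r a) :=
          le_mul_of_one_le_right (rpow_nonneg ha.1 _) ((one_le_div hg).2 (hM a ha))
      _ = M / (r * (r - 1)) * neckCurv r a := by
          have : r - 1 ≠ 0 := by linarith
          rw [neckCurv_eq]
          field_simp
  have hMc : 0 ≤ M / (r * (r - 1)) :=
    div_nonneg (zero_le_one.trans ((one_le_denom r ha₀.1).trans (hM a₀ ha₀))) hc.le
  rcases max_choice a₀ a₁ with h | h <;> rw [h]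
  · exact (key a₀ ha₀).trans (by gcongr; exact le_max_left _ _)
  · exact (key a₁ ha₁).trans (by gcongr; exact le_max_right _ _)

end NeckCurv

open NeckCurv in
/-- One-variable content of Lemma 4.3(2): the intrinsic Hölder--Lipschitz bound
`|k(a₀) - k(a₁)| ≤ C max{k(a₀), k(a₁)}^{(r-3)/(r-2)} |a₀ - a₁|` on `[0, δ]`. -/
theorem neckCurv_intrinsic_lipschitz
    (r δ : ℝ) (hr : 4 < r) (hδ : 0 < δ) :
    ∃ C : ℝ, 0 < C ∧ ∀ a₀ ∈ Set.Icc (0:ℝ) δ, ∀ a₁ ∈ Set.Icc (0:ℝ) δ,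
      |neckCurv r a₀ - neckCurv r a₁| ≤
        C * max (neckCurv r a₀) (neckCurv r a₁) ^ ((r - 3) / (r - 2)) * |a₀ - a₁| := by
  have hdenom := contDiff_denom (r := r) (by linarith)
  obtain ⟨L, hL⟩ := hdenom.contDiffOn.exists_lipschitzOnWith one_ne_zero (convex_Icc 0 δ)
    isCompact_Icc
  obtain ⟨M, hM⟩ := isCompact_Icc.exists_bound_of_continuousOn hdenom.continuous.continuousOn
  replace hM : ∀ a ∈ Icc 0 δ, denom r a ≤ M := fun a ha => (le_abs_self _).trans (hM a ha)
  have hc : 0 < r * (r - 1) := by nlinarith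
  have hC₁ : 0 < r * (r - 1) * ((r - 2) + δ * L) :=
    mul_pos hc (by linarith [show 0 ≤ δ * L by positivity])
  have hC₂ : 0 < M / (r * (r - 1)) :=
    div_pos (one_pos.trans_le ((one_le_denom r le_rfl).trans (hM 0 ⟨le_rfl, hδ.le⟩))) hc
  set θ := (r - 3) / (r - 2)
  refine ⟨r * (r - 1) * ((r - 2) + δ * L) * (M / (r * (r - 1))) ^ θ, by positivity, ?_⟩
  intro a₀ ha₀ a₁ ha₁
  have hm : 0 ≤ max a₀ a₁ := ha₀.1.trans (le_max_left _ _)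
  have hpow : max a₀ a₁ ^ (r - 3) = (max a₀ a₁ ^ (r - 2)) ^ θ := by
    rw [← rpow_mul hm, mul_div_cancel₀ _ (by linarith : r - 2 ≠ 0)]
  calc |neckCurv r a₀ - neckCurv r a₁|
      ≤ r * (r - 1) * ((r - 2) + δ * L) * max a₀ a₁ ^ (r - 3) * |a₀ - a₁| :=
        abs_neckCurv_sub_le (by linarith) hL ha₀ ha₁
    _ ≤ r * (r - 1) * ((r - 2) + δ * L) *
          (M / (r * (r - 1)) * max (neckCurv r a₀) (neckCurv r a₁)) ^ θ * |a₀ - a₁| := by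
        rw [hpow]
        gcongr
        · exact div_nonneg (by linarith) (by linarith)
        · exact max_rpow_le_mul_max_neckCurv (by linarith) hM ha₀ ha₁
    _ = _ := by
        rw [mul_rpow hC₂.le (le_max_of_le_left (neckCurv_nonneg (by linarith) ha₀.1))]
        ring
end
end

section
/- Let L > 0. There exist constants C > 0 and n₀ ≥ 1 such that for all integers n ≥ n₀, |∫_{I_n} sin ψ dψ − (L²/π²)·n^{-3}| ≤ C·n^{-4}, where I_n = {ψ ∈ (0, π/2) : L/((n+1)π) < tan ψ ≤ L/(nπ)}. Equivalently, |cos(arctan(L/((n+1)π))) − cos(arctan(L/(nπ))) − (L²/π²)·n^{-3}| ≤ C·n^{-4}. -/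
/-!
With `c = L/π`, `a = c/n` and `b = c/(n+1)`, the band is the interval `(arctan b, arctan a]`,
so the flux integral is `cos (arctan b) - cos (arctan a)`. Since
`cos (arctan x) = (1 + x²)^(-1/2) = 1 - x²/2 + O(x⁴)`, this is `(a² - b²)/2 + O(n⁻⁴)`,
and `(a² - b²)/2 = c²/n³ + O(n⁻⁴)`.
-/

open MeasureTheory Set Real

lemma inv_sqrt_one_add_mem_Icc {u : ℝ} (hu₀ : 0 ≤ u) (hu₁ : u ≤ 1) :
    (√(1 + u))⁻¹ ∈ Icc (1 - u / 2) (1 - u / 2 + u ^ 2) := by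
  have hs : 0 < √(1 + u) := sqrt_pos.mpr (by linarith)
  have hsq : √(1 + u) ^ 2 = 1 + u := sq_sqrt (by linarith)
  rw [mem_Icc, inv_eq_one_div, le_div_iff₀ hs, div_le_iff₀ hs,
    ← pow_le_one_iff_of_nonneg (mul_nonneg (by linarith) hs.le) two_ne_zero,
    ← one_le_pow_iff_of_nonneg (mul_nonneg (by nlinarith) hs.le) two_ne_zero,
    mul_pow, mul_pow, hsq]
  constructor
  · nlinarith [mul_nonneg (mul_nonneg hu₀ hu₀) (sub_nonneg.2 hu₁)]
  · nlinarith [mul_nonneg (mul_nonneg hu₀ hu₀) hu₀, pow_nonneg hu₀ 4, pow_nonneg hu₀ 5]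

lemma abs_cos_arctan_sub_le {x : ℝ} (hx : x ^ 2 ≤ 1) :
    |cos (arctan x) - (1 - x ^ 2 / 2)| ≤ x ^ 4 := by
  obtain ⟨hlo, hhi⟩ := inv_sqrt_one_add_mem_Icc (sq_nonneg x) hx
  rw [cos_arctan, one_div, abs_le]
  constructor <;> nlinarith

lemma abs_sq_div_sub_sq_div_add_one_sub_le (c : ℝ) {x : ℝ} (hx : 0 < x) :
    |((c / x) ^ 2 - (c / (x + 1)) ^ 2) / 2 - c ^ 2 * (x ^ 3)⁻¹| ≤
      2 * c ^ 2 * (x ^ 4)⁻¹ := by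
  have hdiff : ((c / x) ^ 2 - (c / (x + 1)) ^ 2) / 2 - c ^ 2 * (x ^ 3)⁻¹ =
      -(c ^ 2 * (3 * x + 2) / (2 * x ^ 3 * (x + 1) ^ 2)) := by
    field_simp
    ring
  rw [hdiff, abs_neg, abs_of_nonneg (by positivity),
    ← div_eq_mul_inv, div_le_div_iff₀ (by positivity) (by positivity)]
  have hquad : (3 * x + 2) * x ≤ 4 * (x + 1) ^ 2 := by nlinarith
  nlinarith [mul_le_mul_of_nonneg_left hquad (by positivity : 0 ≤ c ^ 2 * x ^ 3)]

lemma abs_cos_arctan_div_add_one_sub_cos_arctan_div_sub_le {c x : ℝ} (hx : 0 < x)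
    (hcx : |c| ≤ x) :
    |cos (arctan (c / (x + 1))) - cos (arctan (c / x)) - c ^ 2 * (x ^ 3)⁻¹| ≤
      (2 * c ^ 4 + 2 * c ^ 2) * (x ^ 4)⁻¹ := by
  have hcx₂ : c ^ 2 ≤ x ^ 2 := sq_le_sq' (abs_le.1 hcx).1 (abs_le.1 hcx).2
  have ha : (c / x) ^ 2 ≤ 1 := by
    rw [div_pow, div_le_one (by positivity)]; exact hcx₂
  have hb : (c / (x + 1)) ^ 2 ≤ 1 := by
    rw [div_pow, div_le_one (by positivity)]; nlinarith
  have hba : (c / (x + 1)) ^ 4 ≤ (c / x) ^ 4 := by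
    rw [div_pow, div_pow]; gcongr; linarith
  have ha₄ : (c / x) ^ 4 = c ^ 4 * (x ^ 4)⁻¹ := by rw [div_pow, div_eq_mul_inv]
  have hP := abs_le.1 (abs_cos_arctan_sub_le hb)
  have hQ := abs_le.1 (abs_cos_arctan_sub_le ha)
  have hZ := abs_le.1 (abs_sq_div_sub_sq_div_add_one_sub_le c hx)
  rw [abs_le]
  constructor <;> nlinarith

lemma integral_sin_tan_band {a b : ℝ} (hb : 0 ≤ b) (hba : b ≤ a) :
    ∫ ψ in {ψ : ℝ | ψ ∈ Ioo 0 (π / 2) ∧ b < tan ψ ∧ tan ψ ≤ a}, sin ψ =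
      cos (arctan b) - cos (arctan a) := by
  have hband : {ψ : ℝ | ψ ∈ Ioo 0 (π / 2) ∧ b < tan ψ ∧ tan ψ ≤ a} =
      Ioc (arctan b) (arctan a) := by
    ext ψ
    constructor
    · rintro ⟨⟨hψ₀, hψ₁⟩, hbψ, hψa⟩
      have hψ : arctan (tan ψ) = ψ := arctan_tan (by linarith) hψ₁
      exact ⟨hψ ▸ arctan_strictMono hbψ, hψ ▸ arctan_mono hψa⟩
    · rintro ⟨hbψ, hψa⟩
      have hψ₀ : 0 < ψ := (arctan_nonneg.2 hb).trans_lt hbψ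
      have hψ₁ : ψ < π / 2 := hψa.trans_lt (arctan_lt_pi_div_two a)
      refine ⟨⟨hψ₀, hψ₁⟩, ?_⟩
      rw [← arctan_lt_arctan_iff, ← arctan_le_arctan_iff, arctan_tan (by linarith) hψ₁]
      exact ⟨hbψ, hψa⟩
  rw [hband, ← intervalIntegral.integral_of_le (arctan_mono hba), integral_sin]

/-- Computation underlying Lemma 7.3(1): integrating the flux density `sin ψ` over the
band `I_n = {ψ ∈ (0, π/2) : L/((n+1)π) < tan ψ ≤ L/(nπ)}` yields
`(L²/π²) n⁻³ + O(n⁻⁴)`; equivalently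
`cos(arctan(L/((n+1)π))) - cos(arctan(L/(nπ))) = (L²/π²) n⁻³ + O(n⁻⁴)`. -/
theorem flux_band_integral_asymptotics (L : ℝ) (hL : 0 < L) :
    ∃ C : ℝ, 0 < C ∧ ∃ n₀ : ℕ, 1 ≤ n₀ ∧ ∀ n : ℕ, n₀ ≤ n →
      |(∫ ψ in {ψ : ℝ | ψ ∈ Set.Ioo 0 (π / 2) ∧
            L / (((n : ℝ) + 1) * π) < Real.tan ψ ∧ Real.tan ψ ≤ L / ((n : ℝ) * π)},
          Real.sin ψ) - L ^ 2 / π ^ 2 * ((n : ℝ) ^ 3)⁻¹| ≤ C * ((n : ℝ) ^ 4)⁻¹ ∧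
      |Real.cos (Real.arctan (L / (((n : ℝ) + 1) * π))) -
          Real.cos (Real.arctan (L / ((n : ℝ) * π))) -
          L ^ 2 / π ^ 2 * ((n : ℝ) ^ 3)⁻¹| ≤ C * ((n : ℝ) ^ 4)⁻¹ := by
  have hc : 0 < L / π := div_pos hL pi_pos
  have hscale (x : ℝ) : L / (x * π) = L / π / x := by rw [mul_comm, div_div]
  refine ⟨2 * (L / π) ^ 4 + 2 * (L / π) ^ 2, by positivity, ⌈L / π⌉₊, Nat.ceil_pos.2 hc,
    fun n hn => ?_⟩
  have hcn : L / π ≤ n := Nat.ceil_le.1 hn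
  have hn₀ : (0 : ℝ) < n := hc.trans_le hcn
  have hest := abs_cos_arctan_div_add_one_sub_cos_arctan_div_sub_le hn₀
    ((abs_of_pos hc).trans_le hcn)
  rw [hscale, hscale, ← div_pow, integral_sin_tan_band (by positivity)
    (div_le_div_of_nonneg_left hc.le hn₀ (by linarith))]
  exact ⟨hest, hest⟩
end
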